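/- arXiv:2206.07462 — 6 statements merged into one kernel-verified Lean document; each statement's English description precedes it below -/
import Mathlib

section
/- Let f be a polynomial of degree d ≥ 2 and let Γ ⊂ ℂ be an arc with endpoints x₀, x₁. Suppose f restricted to Γ is a homeomorphism of Γ onto itself with f(x₀) = x₀. Then there exists a fixed point z of f in Γ which is non-repelling, i.e. |f'(z)| ≤ 1. -/
open Set Filter Polynomial Topology

/-- If a non-constant orbit of a polynomial converges to a fixed point `z`, then
`|p'(z)| ≤ 1`. -/
private lemma abs_deriv_le_one_of_orbit (p : Polynomial ℂ) (z : ℂ) (w : ℕ → ℂ)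
    (hw : Tendsto w atTop (𝓝 z)) (hne : ∀ n, w n ≠ z)
    (hstep : ∀ n, p.eval (w n) = w (n + 1)) (hfixz : p.eval z = z) :
    ‖p.derivative.eval z‖ ≤ 1 := by
  by_contra hgt
  push_neg at hgt
  have hd : Tendsto (slope (fun x => p.eval x) z) (𝓝[≠] z) (𝓝 (p.derivative.eval z)) :=
    hasDerivAt_iff_tendsto_slope.mp (p.hasDerivAt z)
  have hwmem : Tendsto w atTop (𝓝[≠] z) :=
    tendsto_nhdsWithin_iff.mpr ⟨hw, Eventually.of_forall fun n => hne n⟩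
  have hslope : Tendsto (fun n => ‖slope (fun x => p.eval x) z (w n)‖) atTop
      (𝓝 ‖p.derivative.eval z‖) :=
    (continuous_norm.tendsto _).comp (hd.comp hwmem)
  have key : ∀ n, ‖slope (fun x => p.eval x) z (w n)‖
      = ‖w (n + 1) - z‖ / ‖w n - z‖ := by
    intro n
    rw [slope_def_field, hstep, hfixz, norm_div]
  have hev : ∀ᶠ n in atTop, (1 : ℝ) < ‖w (n + 1) - z‖ / ‖w n - z‖ := by
    filter_upwards [hslope.eventually_const_lt hgt] with n hn
    rwa [key] at hn
  obtain ⟨N, hN⟩ := eventually_atTop.mp hev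
  have hpos : ∀ n, 0 < ‖w n - z‖ := fun n =>
    norm_pos_iff.mpr (sub_ne_zero.mpr (hne n))
  have hstep' : ∀ n, N ≤ n → ‖w n - z‖ < ‖w (n + 1) - z‖ := fun n hn =>
    (one_lt_div (hpos n)).mp (hN n hn)
  have hmono : ∀ k, ‖w N - z‖ ≤ ‖w (N + k) - z‖ := by
    intro k
    induction k with
    | zero => simp
    | succ k ih => exact ih.trans (hstep' (N + k) (Nat.le_add_right N k)).le
  have h0 : Tendsto (fun n => ‖w n - z‖) atTop (𝓝 0) := by
    have : Tendsto (fun n => w n - z) atTop (𝓝 (z - z)) := hw.sub_const z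
    rw [sub_self] at this
    exact tendsto_norm_zero.comp this
  obtain ⟨M, hM⟩ := eventually_atTop.mp (h0.eventually_lt_const (hpos N))
  have hMN := hM (N + (M - N) + N) (by omega)
  have := hmono ((M - N) + N)
  rw [← add_assoc] at this
  linarith

/-- Let `f` be a polynomial of degree `d ≥ 2` and let `Γ ⊆ ℂ` be an arc with
endpoints `x₀ = ξ 0` and `x₁ = ξ 1`.  If `f` restricted to `Γ` is a homeomorphism of
`Γ` onto itself (for compact sets, a continuous bijection) fixing `x₀`, then `f` has a
non-repelling fixed point in `Γ`, i.e. a fixed point `z` with `|f'(z)| ≤ 1`. -/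
theorem exists_nonrepelling_fixed_point_on_arc
    (p : Polynomial ℂ) (hdeg : 2 ≤ p.natDegree)
    (ξ : ℝ → ℂ) (hcont : ContinuousOn ξ (Set.Icc 0 1)) (hinj : Set.InjOn ξ (Set.Icc 0 1))
    (Γ : Set ℂ) (hΓ : Γ = ξ '' Set.Icc 0 1)
    (hmap : Set.BijOn p.eval Γ Γ)
    (hfix : p.eval (ξ 0) = ξ 0) :
    ∃ z ∈ Γ, p.eval z = z ∧ ‖p.derivative.eval z‖ ≤ 1 := by
  classical
  have h0I : (0 : ℝ) ∈ Icc (0:ℝ) 1 := ⟨le_refl 0, zero_le_one⟩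
  have h1I : (1 : ℝ) ∈ Icc (0:ℝ) 1 := ⟨zero_le_one, le_refl 1⟩
  have hΓsub : ∀ t ∈ Icc (0:ℝ) 1, ξ t ∈ Γ := fun t ht => hΓ ▸ mem_image_of_mem _ ht
  haveI : CompactSpace (Icc (0:ℝ) 1) := isCompact_iff_compactSpace.mp isCompact_Icc
  -- The homeomorphism from [0,1] to Γ
  let F : Icc (0:ℝ) 1 → Γ := fun t => ⟨ξ t, hΓsub t t.2⟩
  have hFcont : Continuous F := Continuous.subtype_mk hcont.restrict _
  have hFbij : Function.Bijective F := by
    constructor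
    · rintro ⟨a, ha⟩ ⟨b, hb⟩ hab
      exact Subtype.ext (hinj ha hb (congrArg Subtype.val hab))
    · rintro ⟨w, hw⟩
      rw [hΓ] at hw
      obtain ⟨t, ht, rfl⟩ := hw
      exact ⟨⟨t, ht⟩, rfl⟩
  let e : Icc (0:ℝ) 1 ≃ Γ := Equiv.ofBijective F hFbij
  let h : Icc (0:ℝ) 1 ≃ₜ Γ := Continuous.homeoOfEquivCompactToT2 (f := e) hFcont
  -- the inverse of ξ on Γ
  let ginv : ℂ → ℝ := fun w => if hw : w ∈ Γ then (h.symm ⟨w, hw⟩ : ℝ) else 0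
  have hginv_mem : ∀ w ∈ Γ, ginv w ∈ Icc (0:ℝ) 1 := by
    intro w hw
    simp only [ginv, dif_pos hw]
    exact (h.symm ⟨w, hw⟩).2
  have hginv_eq : ∀ w, ∀ hw : w ∈ Γ, ξ (ginv w) = w := by
    intro w hw
    have h2 : h (h.symm ⟨w, hw⟩) = ⟨w, hw⟩ := h.apply_symm_apply _
    have h3 : (F (h.symm ⟨w, hw⟩) : ℂ) = w := congrArg Subtype.val h2
    simpa only [ginv, dif_pos hw] using h3
  have hginv_cont : ContinuousOn ginv Γ := by
    rw [continuousOn_iff_continuous_restrict]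
    have : Γ.domRestrict ginv = fun w : Γ => (h.symm w : ℝ) := by
      funext w
      simp only [domRestrict, ginv, dif_pos w.2]
    rw [this]
    exact continuous_subtype_val.comp h.symm.continuous
  -- the conjugated map g on [0,1]
  set g : ℝ → ℝ := fun t => ginv (p.eval (ξ t)) with hgdef
  have hmapsto : MapsTo (fun t => p.eval (ξ t)) (Icc (0:ℝ) 1) Γ := fun t ht =>
    hmap.mapsTo (hΓsub t ht)
  have hgmem : ∀ t ∈ Icc (0:ℝ) 1, g t ∈ Icc (0:ℝ) 1 := fun t ht => hginv_mem _ (hmapsto ht)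
  have hgξ : ∀ t ∈ Icc (0:ℝ) 1, ξ (g t) = p.eval (ξ t) := fun t ht => hginv_eq _ (hmapsto ht)
  have hgcont : ContinuousOn g (Icc (0:ℝ) 1) :=
    hginv_cont.comp (p.continuous.comp_continuousOn hcont) hmapsto
  have hg0 : g 0 = 0 := by
    apply hinj (hgmem 0 h0I) h0I
    rw [hgξ 0 h0I, hfix]
  have hginj : InjOn g (Icc (0:ℝ) 1) := by
    intro a ha b hb hab
    apply hinj ha hb
    apply hmap.injOn (hΓsub a ha) (hΓsub b hb)
    show p.eval (ξ a) = p.eval (ξ b)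
    rw [← hgξ a ha, ← hgξ b hb, hab]
  have hmono : StrictMonoOn g (Icc (0:ℝ) 1) := by
    rcases ContinuousOn.strictMonoOn_of_injOn_Icc' zero_le_one hgcont hginj with hm | ha
    · exact hm
    · exfalso
      have h1 := ha h0I h1I zero_lt_one
      have h2 := (hgmem 1 h1I).1
      rw [hg0] at h1
      linarith
  -- there is a non-fixed point of g, else p = X
  have hexist : ∃ t ∈ Icc (0:ℝ) 1, g t ≠ t := by
    by_contra hall
    push_neg at hall
    have hΓinf : Γ.Infinite := by
      rw [hΓ]
      exact (Set.Icc_infinite zero_lt_one).image hinj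
    have hsub : Γ ⊆ { x | (p - X).IsRoot x } := by
      intro w hw
      rw [hΓ] at hw
      obtain ⟨t, ht, rfl⟩ := hw
      have : p.eval (ξ t) = ξ t := by rw [← hgξ t ht, hall t ht]
      simp [IsRoot, sub_eq_zero, this]
    have hq0 : p - X = 0 := (p - X).eq_zero_of_infinite_isRoot (hΓinf.mono hsub)
    have hpX : p = X := sub_eq_zero.mp hq0
    rw [hpX, natDegree_X] at hdeg
    omega
  obtain ⟨t₀, ht₀, hgt₀⟩ := hexist
  -- the orbit of t₀
  set u : ℕ → ℝ := fun n => g^[n] t₀ with hudef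
  have hu0 : u 0 = t₀ := rfl
  have huS : ∀ n, u (n + 1) = g (u n) := fun n => Function.iterate_succ_apply' g n t₀
  have humem : ∀ n, u n ∈ Icc (0:ℝ) 1 := by
    intro n
    induction n with
    | zero => exact ht₀
    | succ n ih => rw [huS]; exact hgmem _ ih
  -- the orbit is strictly monotone and converges to a point L, never equal to L
  have key : ∃ L ∈ Icc (0:ℝ) 1, Tendsto u atTop (𝓝 L) ∧ ∀ n, u n ≠ L := by
    rcases lt_or_gt_of_ne hgt₀ with hlt | hgt
    · -- g t₀ < t₀ : strictly decreasing orbit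
      have hstep : ∀ n, u (n + 1) < u n := by
        intro n
        induction n with
        | zero => rw [huS, hu0]; exact hlt
        | succ n ih =>
          have h' := hmono (humem (n + 1)) (humem n) ih
          rwa [← huS (n + 1), ← huS n] at h'
      have hbdd : BddBelow (range u) := ⟨0, by rintro x ⟨n, rfl⟩; exact (humem n).1⟩
      have hanti : Antitone u := (strictAnti_nat_of_succ_lt hstep).antitone
      refine ⟨⨅ n, u n, ⟨le_ciInf fun n => (humem n).1,
        le_trans (ciInf_le hbdd 0) (humem 0).2⟩, tendsto_atTop_ciInf hanti hbdd, fun n => ?_⟩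
      exact (lt_of_le_of_lt (ciInf_le hbdd (n + 1)) (hstep n)).ne'
    · -- g t₀ > t₀ : strictly increasing orbit
      have hstep : ∀ n, u n < u (n + 1) := by
        intro n
        induction n with
        | zero => rw [huS, hu0]; exact hgt
        | succ n ih =>
          have h' := hmono (humem n) (humem (n + 1)) ih
          rwa [← huS (n + 1), ← huS n] at h'
      have hbdd : BddAbove (range u) := ⟨1, by rintro x ⟨n, rfl⟩; exact (humem n).2⟩
      have hmonu : Monotone u := (strictMono_nat_of_lt_succ hstep).monotone
      refine ⟨⨆ n, u n, ⟨le_trans (humem 0).1 (le_ciSup hbdd 0),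
        ciSup_le fun n => (humem n).2⟩, tendsto_atTop_ciSup hmonu hbdd, fun n => ?_⟩
      exact (lt_of_lt_of_le (hstep n) (le_ciSup hbdd (n + 1))).ne
  obtain ⟨L, hLI, htend, hneL⟩ := key
  set z := ξ L with hzdef
  have hwz : Tendsto (fun n => ξ (u n)) atTop (𝓝 z) := by
    have h1 : Tendsto u atTop (𝓝[Icc (0:ℝ) 1] L) :=
      tendsto_nhdsWithin_iff.mpr ⟨htend, Eventually.of_forall humem⟩
    exact (hcont L hLI).tendsto.comp h1
  have hstepw : ∀ n, p.eval (ξ (u n)) = ξ (u (n + 1)) := by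
    intro n
    rw [huS, hgξ _ (humem n)]
  have hfixz : p.eval z = z := by
    have h1 : Tendsto (fun n => p.eval (ξ (u n))) atTop (𝓝 (p.eval z)) :=
      (p.continuous.tendsto z).comp hwz
    have h2 : Tendsto (fun n => ξ (u (n + 1))) atTop (𝓝 z) :=
      hwz.comp (tendsto_add_atTop_nat 1)
    exact tendsto_nhds_unique (h1.congr hstepw) h2
  have hneq : ∀ n, ξ (u n) ≠ z := fun n hn => hneL n (hinj (humem n) hLI hn)
  exact ⟨z, hΓsub L hLI, hfixz,
    abs_deriv_le_one_of_orbit p z (fun n => ξ (u n)) hwz hneq hstepw hfixz⟩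
end

section
/- Let U, Ω, Ωₙ (n ∈ ℕ) be nonempty open subsets of ℂ, and let f : U → Ω and fₙ : U → Ωₙ be orientation-preserving homeomorphisms. If fₙ → f uniformly on compact subsets of U, then fₙ⁻¹ → f⁻¹ uniformly on compact subsets of Ω (for n large enough each fₙ⁻¹ is defined on any given compact subset of Ω). -/
open Metric Set

/-- If the boundary sphere image stays farther from `z'` than `F w` is, then `z'`
is attained by `F` on the closed ball. -/
lemma hit_lemma {F : ℂ → ℂ} {V : Set ℂ} (hFc : ContinuousOn F V)
    (hFopen : ∀ s ⊆ V, IsOpen s → IsOpen (F '' s))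
    {w : ℂ} {r : ℝ} (hr : 0 < r) (hball : Metric.closedBall w r ⊆ V)
    {z' : ℂ} (h : ∀ x ∈ Metric.sphere w r, dist (F w) z' < dist (F x) z') :
    z' ∈ F '' Metric.closedBall w r := by
  by_contra hz
  set S := F '' Metric.closedBall w r with hS
  have hScpt : IsCompact S := (isCompact_closedBall w r).image_of_continuousOn (hFc.mono hball)
  have hSclosed : IsClosed S := hScpt.isClosed
  have hOpen : IsOpen (F '' Metric.ball w r) :=
    hFopen _ (Metric.ball_subset_closedBall.trans hball) Metric.isOpen_ball
  set seg := segment ℝ (F w) z' with hseg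
  have hsegsub : seg ⊆ Metric.closedBall z' (dist (F w) z') :=
    (convex_closedBall z' (dist (F w) z')).segment_subset
      (by simp [Metric.mem_closedBall, dist_comm])
      (Metric.mem_closedBall_self dist_nonneg)
  have hmiss : ∀ p ∈ seg, p ∈ S → p ∈ F '' Metric.ball w r := by
    rintro p hp ⟨x, hx, rfl⟩
    by_contra hnb
    have hxs : x ∈ Metric.sphere w r := by
      rcases lt_or_eq_of_le (Metric.mem_closedBall.1 hx) with h' | h'
      · exact absurd ⟨x, h', rfl⟩ hnb
      · exact h'
    have h1 := h x hxs
    have h2 : dist (F x) z' ≤ dist (F w) z' := by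
      simpa [Metric.mem_closedBall, dist_comm] using hsegsub hp
    linarith
  have hpre : IsPreconnected seg := (convex_segment _ _).isPreconnected
  obtain ⟨p, _, hp1, hp2⟩ := hpre (F '' Metric.ball w r) Sᶜ hOpen hSclosed.isOpen_compl
    (fun p hp => by
      by_cases hpS : p ∈ S
      · exact Or.inl (hmiss p hp hpS)
      · exact Or.inr hpS)
    ⟨F w, left_mem_segment _ _ _, ⟨w, Metric.mem_ball_self hr, rfl⟩⟩
    ⟨z', right_mem_segment _ _ _, hz⟩
  exact hp2 (Set.image_mono (f := F) Metric.ball_subset_closedBall hp1)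

/-- If `fₙ : U → Ωₙ` and `f : U → Ω` are homeomorphisms between nonempty open
subsets of `ℂ` (with inverses `gₙ`, `g`), and `fₙ → f` uniformly on compact subsets
of `U`, then `fₙ⁻¹ → f⁻¹` uniformly on compact subsets of `Ω`: for every compact
`K ⊆ Ω` and `ε > 0`, eventually `K ⊆ Ωₙ` and `gₙ` is within `ε` of `g` on `K`. -/
theorem inverse_tendsto_uniformly_on_compacts
    (U Ω : Set ℂ) (Ωn : ℕ → Set ℂ)
    (hUo : IsOpen U) (hΩo : IsOpen Ω) (hΩno : ∀ n, IsOpen (Ωn n))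
    (hUne : U.Nonempty) (hΩne : Ω.Nonempty) (hΩnne : ∀ n, (Ωn n).Nonempty)
    (f g : ℂ → ℂ) (fn gn : ℕ → ℂ → ℂ)
    (hf : Set.BijOn f U Ω) (hfc : ContinuousOn f U)
    (hg : Set.InvOn g f U Ω) (hgc : ContinuousOn g Ω)
    (hfn : ∀ n, Set.BijOn (fn n) U (Ωn n)) (hfnc : ∀ n, ContinuousOn (fn n) U)
    (hgn : ∀ n, Set.InvOn (gn n) (fn n) U (Ωn n))
    (hgnc : ∀ n, ContinuousOn (gn n) (Ωn n))
    (hconv : ∀ K ⊆ U, IsCompact K → TendstoUniformlyOn fn f Filter.atTop K) :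
    ∀ K ⊆ Ω, IsCompact K → ∀ ε > 0, ∃ N : ℕ, ∀ n ≥ N,
      K ⊆ Ωn n ∧ ∀ z ∈ K, dist (gn n z) (g z) < ε := by
  intro K hKΩ hKc ε hε
  -- g maps Ω into U
  have hgU : ∀ z ∈ Ω, g z ∈ U := by
    intro z hz
    obtain ⟨w, hw, rfl⟩ := hf.surjOn hz
    rwa [hg.1 hw]
  -- each fn is an open map on subsets of U
  have hfnopen : ∀ n, ∀ s ⊆ U, IsOpen s → IsOpen (fn n '' s) := by
    intro n s hsU hso
    have : fn n '' s = Ωn n ∩ gn n ⁻¹' s := by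
      ext z
      constructor
      · rintro ⟨y, hy, rfl⟩
        refine ⟨(hfn n).mapsTo (hsU hy), ?_⟩
        simpa [Set.mem_preimage, (hgn n).1 (hsU hy)] using hy
      · rintro ⟨hzΩ, hzs⟩
        exact ⟨gn n z, hzs, (hgn n).2 hzΩ⟩
    rw [this]
    exact (hgnc n).isOpen_inter_preimage (hΩno n) hso
  -- per-point data
  have hdata : ∀ z ∈ K, ∃ r > 0, ∃ ρ > 0, r < ε / 2 ∧ Metric.closedBall (g z) r ⊆ U ∧
      (∀ z'' ∈ Ω, dist z'' z < ρ → dist (g z'') (g z) < ε / 4) ∧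
      (∀ x ∈ Metric.sphere (g z) r, 4 * ρ ≤ dist z (f x)) := by
    intro z hz
    have hzΩ : z ∈ Ω := hKΩ hz
    have hwU : g z ∈ U := hgU z hzΩ
    obtain ⟨r0, hr0, hball0⟩ := Metric.isOpen_iff.1 hUo (g z) hwU
    set r := min (r0 / 2) (ε / 4) with hrdef
    have hr : 0 < r := lt_min (by linarith) (by linarith)
    have hrε : r < ε / 2 := lt_of_le_of_lt (min_le_right _ _) (by linarith)
    have hball : Metric.closedBall (g z) r ⊆ U := by
      refine (Metric.closedBall_subset_ball ?_).trans hball0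
      exact lt_of_le_of_lt (min_le_left _ _) (by linarith)
    -- distance from z to f '' sphere
    have hsne : (Metric.sphere (g z) r).Nonempty := NormedSpace.sphere_nonempty.mpr hr.le
    have hsphU : Metric.sphere (g z) r ⊆ U := Metric.sphere_subset_closedBall.trans hball
    have hcpt : IsCompact (f '' Metric.sphere (g z) r) :=
      (isCompact_sphere _ _).image_of_continuousOn (hfc.mono hsphU)
    have hzni : z ∉ f '' Metric.sphere (g z) r := by
      rintro ⟨x, hx, hxz⟩
      have hzeq : f (g z) = z := hg.2 hzΩ
      have : x = g z := hf.injOn (hsphU hx) hwU (by rw [hxz, hzeq])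
      rw [this] at hx
      simp [Metric.mem_sphere] at hx
      exact hr.ne' hx.symm
    have hδpos : 0 < Metric.infDist z (f '' Metric.sphere (g z) r) :=
      (hcpt.isClosed.notMem_iff_infDist_pos (hsne.image f)).1 hzni
    set δ := Metric.infDist z (f '' Metric.sphere (g z) r) with hδdef
    obtain ⟨ρ0, hρ0, hρcont⟩ := Metric.continuousWithinAt_iff.1 (hgc z hzΩ) (ε / 4) (by linarith)
    refine ⟨r, hr, min ρ0 (δ / 4), lt_min hρ0 (by linarith), hrε, hball, ?_, ?_⟩
    · intro z'' hz'' hd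
      exact hρcont hz'' (lt_of_lt_of_le hd (min_le_left _ _))
    · intro x hx
      have h1 : δ ≤ dist z (f x) := Metric.infDist_le_dist_of_mem ⟨x, hx, rfl⟩
      have h2 : min ρ0 (δ / 4) ≤ δ / 4 := min_le_right _ _
      linarith
  choose! r hrpos ρ hρpos hrε hball hcont hsph using hdata
  -- finite subcover
  obtain ⟨t, htK, hcover⟩ := hKc.elim_nhds_subcover (fun z => Metric.ball z (ρ z))
    (fun z hz => Metric.ball_mem_nhds z (hρpos z hz))
  -- uniform convergence on the finitely many closed balls
  have hev : ∀ᶠ n in Filter.atTop, ∀ i ∈ (t : Set ℂ),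
      ∀ x ∈ Metric.closedBall (g i) (r i), dist (f x) (fn n x) < ρ i := by
    rw [Filter.eventually_all_finite t.finite_toSet]
    intro i hi
    have hiK : i ∈ K := htK i hi
    exact (Metric.tendstoUniformlyOn_iff.1
      (hconv _ (hball i hiK) (isCompact_closedBall _ _))) (ρ i) (hρpos i hiK)
  obtain ⟨N, hN⟩ := Filter.eventually_atTop.1 hev
  refine ⟨N, fun n hn => ?_⟩
  -- key claim: every z' ∈ K is hit
  have hkey : ∀ z' ∈ K, ∃ y ∈ U, fn n y = z' ∧ dist (gn n z') (g z') < ε := by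
    intro z' hz'
    obtain ⟨i, hi, hz'i⟩ := Set.mem_iUnion₂.1 (hcover hz')
    have hiK : i ∈ K := htK i hi
    have hiΩ : i ∈ Ω := hKΩ hiK
    have hz'Ω : z' ∈ Ω := hKΩ hz'
    have hwU : g i ∈ U := hgU i hiΩ
    have hfw : f (g i) = i := hg.2 hiΩ
    have hρd : dist z' i < ρ i := Metric.mem_ball.1 hz'i
    have hNn := hN n hn i hi
    -- hypothesis of hit_lemma
    have hhit : ∀ x ∈ Metric.sphere (g i) (r i),
        dist (fn n (g i)) z' < dist (fn n x) z' := by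
      intro x hx
      have h1 : dist (f (g i)) (fn n (g i)) < ρ i :=
        hNn (g i) (Metric.mem_closedBall_self (hrpos i hiK).le)
      have h2 : dist (f x) (fn n x) < ρ i :=
        hNn x (Metric.sphere_subset_closedBall hx)
      have h3 : 4 * ρ i ≤ dist i (f x) := hsph i hiK x hx
      have e1 : dist (fn n (g i)) z' ≤ dist (fn n (g i)) (f (g i)) + dist (f (g i)) z' := dist_triangle _ _ _
      have e2 : dist (f (g i)) z' = dist i z' := by rw [hfw]
      have e3 : dist i (f x) ≤ dist i z' + dist z' (fn n x) + dist (fn n x) (f x) := by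
        have := dist_triangle4 i z' (fn n x) (f x)
        linarith [this]
      rw [dist_comm (f (g i)) (fn n (g i))] at h1
      rw [dist_comm (f x) (fn n x)] at h2
      have hdiz : dist i z' < ρ i := by rwa [dist_comm] at hρd
      have : dist (fn n (g i)) z' < 2 * ρ i := by
        calc dist (fn n (g i)) z' ≤ dist (fn n (g i)) (f (g i)) + dist (f (g i)) z' := e1
        _ < ρ i + ρ i := by rw [e2]; linarith
        _ = 2 * ρ i := by ring
      have h4 : 2 * ρ i < dist (fn n x) z' := by
        rw [dist_comm (fn n x) z']
        linarith
      linarith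
    have := hit_lemma (hfnc n) (hfnopen n) (hrpos i hiK) (hball i hiK) hhit
    obtain ⟨y, hy, hyz⟩ := this
    have hyU : y ∈ U := hball i hiK hy
    refine ⟨y, hyU, hyz, ?_⟩
    have hgnz : gn n z' = y := by rw [← hyz, (hgn n).1 hyU]
    have hd1 : dist y (g i) ≤ r i := Metric.mem_closedBall.1 hy
    have hd2 : dist (g z') (g i) < ε / 4 := hcont i hiK z' hz'Ω hρd
    rw [hgnz]
    calc dist y (g z') ≤ dist y (g i) + dist (g i) (g z') := dist_triangle _ _ _
    _ ≤ r i + dist (g z') (g i) := by rw [dist_comm (g i) (g z')]; linarith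
    _ < ε / 2 + ε / 4 := by have := hrε i hiK; linarith
    _ < ε := by linarith
  constructor
  · intro z' hz'
    obtain ⟨y, hyU, hyz, _⟩ := hkey z' hz'
    rw [← hyz]
    exact (hfn n).mapsTo hyU
  · intro z' hz'
    exact (hkey z' hz').choose_spec.2.2
end

section
/- Let γ₁, γ₂ ⊂ ℂ be two arcs with common endpoint 0 and disjoint elsewhere, such that γ₁ ∪ γ₂ is smooth except possibly at 0. Let λ ∈ ℂ with |λ| > 1 and suppose λγ₁ ⊇ γ₁ and λγ₂ ⊇ γ₂. Then γ = γ₁ ∪ γ₂ is a quasiarc: there exists a constant C > 0 such that for any parameterization ξ : [0,1] → γ and any 0 ≤ x ≤ y ≤ z ≤ 1, one has |ξ(x) − ξ(z)| ≥ C|ξ(x) − ξ(y)|. -/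
open Set Function

lemma invFunOn_continuousOn {K : Set ℝ} (hK : IsCompact K) {f : ℝ → ℂ}
    (hf : ContinuousOn f K) (hinj : Set.InjOn f K) :
    ContinuousOn (Function.invFunOn f K) (f '' K) := by
  intro z₀ hz₀
  rw [Metric.continuousWithinAt_iff]
  by_contra hcon
  push_neg at hcon
  obtain ⟨ε, hε, hseq⟩ := hcon
  choose z hzmem hzdist hzfar using fun n : ℕ => hseq (1/(n+1)) (by positivity)
  have hex : ∀ n, ∃ a ∈ K, f a = z n := fun n => hzmem n
  have htm : ∀ n, Function.invFunOn f K (z n) ∈ K := fun n => Function.invFunOn_mem (hex n)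
  have hfe : ∀ n, f (Function.invFunOn f K (z n)) = z n := fun n => Function.invFunOn_eq (hex n)
  obtain ⟨a, haK, φ, hφ, hlim⟩ := hK.tendsto_subseq htm
  have hz0K : Function.invFunOn f K z₀ ∈ K := Function.invFunOn_mem hz₀
  have hfz0 : f (Function.invFunOn f K z₀) = z₀ := Function.invFunOn_eq hz₀
  have hzlim : Filter.Tendsto z Filter.atTop (nhds z₀) := by
    rw [tendsto_iff_dist_tendsto_zero]
    apply squeeze_zero (fun n => dist_nonneg) (fun n => (hzdist n).le)
    exact tendsto_one_div_add_atTop_nhds_zero_nat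
  have hfa : f a = z₀ := by
    have h1 : Filter.Tendsto (fun n => f (Function.invFunOn f K (z (φ n)))) Filter.atTop (nhds (f a)) := by
      apply ((hf a haK).tendsto).comp
      rw [tendsto_nhdsWithin_iff]
      exact ⟨hlim, Filter.Eventually.of_forall fun n => htm (φ n)⟩
    have h2 : (fun n => f (Function.invFunOn f K (z (φ n)))) = fun n => z (φ n) := by
      funext n; exact hfe (φ n)
    rw [h2] at h1
    exact tendsto_nhds_unique h1 (hzlim.comp hφ.tendsto_atTop)
  have haeq : a = Function.invFunOn f K z₀ := hinj haK hz0K (by rw [hfa, hfz0])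
  have : Filter.Tendsto (fun n => dist (Function.invFunOn f K (z (φ n))) (Function.invFunOn f K z₀))
      Filter.atTop (nhds 0) := by
    rw [← haeq]
    simpa [dist_eq_norm] using (tendsto_iff_dist_tendsto_zero.mp hlim)
  have hcontra := ge_of_tendsto this (Filter.Eventually.of_forall fun n => hzfar (φ n))
  linarith

open Set Function

lemma local_bilip {ξ : ℝ → ℂ} (hs : ContDiffOn ℝ 1 ξ (Set.Ioc 0 1))
    {t₀ : ℝ} (ht₀ : t₀ ∈ Set.Ioc 0 1) (hd : derivWithin ξ (Set.Ioc 0 1) t₀ ≠ 0) :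
    ∃ δ > 0, δ < t₀ ∧ ∃ c > 0, ∀ a ∈ Set.Icc (t₀ - δ) (t₀ + δ), ∀ b ∈ Set.Icc (t₀ - δ) (t₀ + δ),
      a ≤ 1 → b ≤ 1 →
      c * |a - b| ≤ ‖ξ a - ξ b‖ ∧ ‖ξ a - ξ b‖ ≤ 3 * c * |a - b| := by
  set d := derivWithin ξ (Set.Ioc 0 1) t₀ with hdd
  have hdc : ContinuousOn (derivWithin ξ (Set.Ioc 0 1)) (Set.Ioc 0 1) :=
    hs.continuousOn_derivWithin (uniqueDiffOn_Ioc 0 1) le_rfl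
  have hcwa := hdc t₀ ht₀
  rw [Metric.continuousWithinAt_iff] at hcwa
  obtain ⟨δ₀, hδ₀, hball⟩ := hcwa (‖d‖/2) (half_pos (norm_pos_iff.mpr hd))
  set δ : ℝ := min (δ₀/2) (t₀/2) with hδdef
  have hδpos : 0 < δ := by
    apply lt_min (by positivity) (by have := ht₀.1; positivity)
  have hδt₀ : δ < t₀ := by
    have : t₀/2 < t₀ := by have := ht₀.1; linarith
    exact lt_of_le_of_lt (min_le_right _ _) this
  refine ⟨δ, hδpos, hδt₀, ‖d‖/2, half_pos (norm_pos_iff.mpr hd), ?_⟩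
  intro a ha b hb ha1 hb1
  -- the convex set on which we apply the MVT
  set J : Set ℝ := Set.Icc (t₀ - δ) (min (t₀ + δ) 1) with hJdef
  have hJsub : J ⊆ Set.Ioc 0 1 := by
    intro x hx
    constructor
    · have := hx.1; linarith
    · exact le_trans hx.2 (min_le_right _ _)
  have hJball : ∀ x ∈ J, dist x t₀ < δ₀ := by
    intro x hx
    rw [Real.dist_eq, abs_sub_lt_iff]
    have h1 := hx.1
    have h2 := le_trans hx.2 (min_le_left _ _)
    have h3 : δ ≤ δ₀/2 := min_le_left _ _
    constructor <;> linarith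
  have haJ : a ∈ J := ⟨ha.1, le_min ha.2 ha1⟩
  have hbJ : b ∈ J := ⟨hb.1, le_min hb.2 hb1⟩
  have hF : ∀ x ∈ J, HasDerivWithinAt (fun t : ℝ => ξ t - t • d)
      (derivWithin ξ (Set.Ioc 0 1) x - d) J x := by
    intro x hx
    have h1 : HasDerivWithinAt ξ (derivWithin ξ (Set.Ioc 0 1) x) J x :=
      ((hs.differentiableOn one_ne_zero) x (hJsub hx)).hasDerivWithinAt.mono hJsub
    have h2 : HasDerivWithinAt (fun t : ℝ => t • d) d J x := by
      simpa using ((hasDerivAt_id x).smul_const d).hasDerivWithinAt (s := J)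
    exact h1.sub h2
  have hbound : ∀ x ∈ J, ‖derivWithin ξ (Set.Ioc 0 1) x - d‖ ≤ ‖d‖/2 := by
    intro x hx
    have := hball (hJsub hx) (hJball x hx)
    rw [dist_eq_norm] at this
    exact this.le
  have key : ‖(ξ a - a • d) - (ξ b - b • d)‖ ≤ ‖d‖/2 * ‖a - b‖ :=
    (convex_Icc _ _).norm_image_sub_le_of_norm_hasDerivWithin_le hF hbound hbJ haJ
  have habs : ‖a - b‖ = |a - b| := Real.norm_eq_abs _
  have hsmul : ‖a • d - b • d‖ = |a - b| * ‖d‖ := by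
    rw [← sub_smul, norm_smul, Real.norm_eq_abs]
  have hrw : (ξ a - a • d) - (ξ b - b • d) = (ξ a - ξ b) - (a • d - b • d) := by ring
  rw [hrw, habs] at key
  have h1 : ‖a • d - b • d‖ - ‖ξ a - ξ b‖ ≤ ‖d‖/2 * |a - b| := by
    have h := norm_sub_norm_le (a • d - b • d) (ξ a - ξ b)
    have he : ‖(a • d - b • d) - (ξ a - ξ b)‖ = ‖(ξ a - ξ b) - (a • d - b • d)‖ :=
      norm_sub_rev _ _
    rw [he] at h
    linarith
  have h2 : ‖ξ a - ξ b‖ ≤ |a - b| * ‖d‖ + ‖d‖/2 * |a - b| := by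
    have heq : ξ a - ξ b = ((ξ a - ξ b) - (a • d - b • d)) + (a • d - b • d) := by ring
    calc ‖ξ a - ξ b‖ = ‖((ξ a - ξ b) - (a • d - b • d)) + (a • d - b • d)‖ := by rw [← heq]
      _ ≤ ‖(ξ a - ξ b) - (a • d - b • d)‖ + ‖a • d - b • d‖ := norm_add_le _ _
      _ ≤ |a - b| * ‖d‖ + ‖d‖/2 * |a - b| := by rw [hsmul]; linarith
  rw [hsmul] at h1
  constructor
  · nlinarith [abs_nonneg (a - b), norm_nonneg d]
  · nlinarith [abs_nonneg (a - b), norm_nonneg d]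

set_option maxHeartbeats 4000000 in
/-- Criterion for quasiarcs: let `γ₁ = ξ₁([0,1])` and `γ₂ = ξ₂([0,1])` be arcs with
common endpoint `0 = ξ₁ 0 = ξ₂ 0`, disjoint elsewhere, smooth except possibly at `0`
(the parameterizations are regular `C¹` on `(0,1]`).  If `λ ∈ ℂ` with `|λ| > 1`
satisfies `λγ₁ ⊇ γ₁` and `λγ₂ ⊇ γ₂`, then `γ = γ₁ ∪ γ₂` is a quasiarc: there is
`C > 0` such that for any parameterization `ξ` of `γ` and any `0 ≤ x ≤ y ≤ z ≤ 1`
one has `|ξ x − ξ z| ≥ C |ξ x − ξ y|`. -/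
theorem union_of_invariant_arcs_is_quasiarc
    (ξ₁ ξ₂ : ℝ → ℂ)
    (hc₁ : ContinuousOn ξ₁ (Set.Icc 0 1)) (hc₂ : ContinuousOn ξ₂ (Set.Icc 0 1))
    (hi₁ : Set.InjOn ξ₁ (Set.Icc 0 1)) (hi₂ : Set.InjOn ξ₂ (Set.Icc 0 1))
    (h0₁ : ξ₁ 0 = 0) (h0₂ : ξ₂ 0 = 0)
    (γ₁ γ₂ : Set ℂ) (hγ₁ : γ₁ = ξ₁ '' Set.Icc 0 1) (hγ₂ : γ₂ = ξ₂ '' Set.Icc 0 1)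
    (hdisj : γ₁ ∩ γ₂ = {0})
    (hs₁ : ContDiffOn ℝ 1 ξ₁ (Set.Ioc 0 1)) (hs₂ : ContDiffOn ℝ 1 ξ₂ (Set.Ioc 0 1))
    (hr₁ : ∀ t ∈ Set.Ioc (0 : ℝ) 1, derivWithin ξ₁ (Set.Ioc 0 1) t ≠ 0)
    (hr₂ : ∀ t ∈ Set.Ioc (0 : ℝ) 1, derivWithin ξ₂ (Set.Ioc 0 1) t ≠ 0)
    (l : ℂ) (hl : 1 < ‖l‖)
    (hinv₁ : γ₁ ⊆ (fun z => l * z) '' γ₁) (hinv₂ : γ₂ ⊆ (fun z => l * z) '' γ₂) :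
    ∃ C > 0, ∀ ξ : ℝ → ℂ, ContinuousOn ξ (Set.Icc 0 1) → Set.InjOn ξ (Set.Icc 0 1) →
      ξ '' Set.Icc 0 1 = γ₁ ∪ γ₂ →
      ∀ x y z : ℝ, 0 ≤ x → x ≤ y → y ≤ z → z ≤ 1 →
        C * ‖ξ x - ξ y‖ ≤ ‖ξ x - ξ z‖ := by
  classical
  set K : Set ℝ := Set.Icc (-1 : ℝ) 1 with hKdef
  set g : ℝ → ℂ := fun t => if t < 0 then ξ₂ (-t) else ξ₁ t with hgdef
  set γ : Set ℂ := γ₁ ∪ γ₂ with hγdef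
  have hl0 : l ≠ 0 := by
    intro h; rw [h] at hl; simp at hl; linarith
  have g0 : g 0 = 0 := by simp [hgdef, h0₁]
  have gpos : ∀ t : ℝ, 0 ≤ t → g t = ξ₁ t := by
    intro t ht; simp [hgdef, not_lt.mpr ht]
  have gneg : ∀ t : ℝ, t < 0 → g t = ξ₂ (-t) := by
    intro t ht; simp [hgdef, ht]
  have h0γ₁ : (0 : ℂ) ∈ γ₁ := hγ₁ ▸ ⟨0, ⟨le_refl 0, zero_le_one⟩, h0₁⟩
  have h0γ₂ : (0 : ℂ) ∈ γ₂ := hγ₂ ▸ ⟨0, ⟨le_refl 0, zero_le_one⟩, h0₂⟩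
  have gmem₁ : ∀ t : ℝ, 0 ≤ t → t ≤ 1 → g t ∈ γ₁ := by
    intro t h1 h2; rw [gpos t h1]; exact hγ₁ ▸ ⟨t, ⟨h1, h2⟩, rfl⟩
  have gmem₂ : ∀ t : ℝ, -1 ≤ t → t ≤ 0 → g t ∈ γ₂ := by
    intro t h1 h2
    rcases lt_or_eq_of_le h2 with h | h
    · rw [gneg t h]; exact hγ₂ ▸ ⟨-t, ⟨by linarith, by linarith⟩, rfl⟩
    · rw [h, g0]; exact h0γ₂
  have hgcont : ContinuousOn g K := by
    have hcneg : ContinuousOn (fun t : ℝ => ξ₂ (-t)) (Set.Icc (-1 : ℝ) 0) := by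
      apply hc₂.comp continuous_neg.continuousOn
      intro t ht
      have h1 := ht.1; have h2 := ht.2
      simp only [Set.mem_Icc]
      constructor <;> linarith
    have h1 : ContinuousOn g (Set.Icc (-1 : ℝ) 0) := by
      apply hcneg.congr
      intro t ht
      rcases lt_or_eq_of_le ht.2 with h | h
      · exact gneg t h
      · rw [h, g0]; simp [h0₂]
    have h2 : ContinuousOn g (Set.Icc (0 : ℝ) 1) := by
      apply hc₁.congr
      intro t ht; exact gpos t ht.1
    intro x hx
    have hcu : ContinuousWithinAt g (Set.Icc (-1 : ℝ) 0 ∪ Set.Icc (0 : ℝ) 1) x := by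
      rcases lt_trichotomy x 0 with h | h | h
      · refine ((h1 x ⟨hx.1, h.le⟩).union (continuousWithinAt_of_notMem_closure ?_))
        rw [closure_Icc]
        intro hmem; exact absurd hmem.1 (not_le.mpr h)
      · subst h
        exact (h1 0 ⟨by norm_num, le_refl 0⟩).union (h2 0 ⟨le_refl 0, by norm_num⟩)
      · refine (ContinuousWithinAt.union (continuousWithinAt_of_notMem_closure ?_) (h2 x ⟨h.le, hx.2⟩))
        rw [closure_Icc]
        intro hmem; linarith [hmem.2]
    apply hcu.mono
    intro t ht
    rcases le_total t 0 with h | h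
    · exact Or.inl ⟨ht.1, h⟩
    · exact Or.inr ⟨h, ht.2⟩
  have hginj : Set.InjOn g K := by
    intro a ha b hb hab
    rcases lt_or_ge a 0 with h1 | h1 <;> rcases lt_or_ge b 0 with h2 | h2
    · rw [gneg a h1, gneg b h2] at hab
      have := hi₂ ⟨by linarith [h1.le], by linarith [ha.1]⟩ ⟨by linarith [h2.le], by linarith [hb.1]⟩ hab
      linarith
    · exfalso
      rw [gneg a h1, gpos b h2] at hab
      have hm : ξ₂ (-a) ∈ γ₁ ∩ γ₂ := by
        constructor
        · rw [hab]; exact hγ₁ ▸ ⟨b, ⟨h2, hb.2⟩, rfl⟩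
        · exact hγ₂ ▸ ⟨-a, ⟨by linarith, by linarith [ha.1]⟩, rfl⟩
      rw [hdisj] at hm
      have : (-a : ℝ) = 0 := by
        apply hi₂ ⟨by linarith, by linarith [ha.1]⟩ ⟨le_refl 0, zero_le_one⟩
        rw [hm, h0₂]
      linarith
    · exfalso
      rw [gpos a h1, gneg b h2] at hab
      have hm : ξ₂ (-b) ∈ γ₁ ∩ γ₂ := by
        constructor
        · rw [← hab]; exact hγ₁ ▸ ⟨a, ⟨h1, ha.2⟩, rfl⟩
        · exact hγ₂ ▸ ⟨-b, ⟨by linarith, by linarith [hb.1]⟩, rfl⟩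
      rw [hdisj] at hm
      have : (-b : ℝ) = 0 := by
        apply hi₂ ⟨by linarith, by linarith [hb.1]⟩ ⟨le_refl 0, zero_le_one⟩
        rw [hm, h0₂]
      linarith
    · rw [gpos a h1, gpos b h2] at hab
      exact hi₁ ⟨h1, ha.2⟩ ⟨h2, hb.2⟩ hab
  have hgimg : g '' K = γ := by
    apply Set.Subset.antisymm
    · rintro z ⟨t, ht, rfl⟩
      rcases lt_or_ge t 0 with h | h
      · exact Or.inr (gmem₂ t ht.1 h.le)
      · exact Or.inl (gmem₁ t h ht.2)
    · rintro z (hz | hz)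
      · rw [hγ₁] at hz
        obtain ⟨t, ht, rfl⟩ := hz
        exact ⟨t, ⟨by linarith [ht.1], ht.2⟩, gpos t ht.1⟩
      · rw [hγ₂] at hz
        obtain ⟨t, ht, rfl⟩ := hz
        refine ⟨-t, ⟨by linarith [ht.2], by linarith [ht.1]⟩, ?_⟩
        rcases lt_or_eq_of_le ht.1 with h | h
        · rw [gneg (-t) (by linarith), neg_neg]
        · rw [← h, neg_zero, g0]; exact h0₂.symm
  -- inverse of g
  set ginv : ℂ → ℝ := Function.invFunOn g K with hginvdef
  have hKcompact : IsCompact K := isCompact_Icc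
  have hginvcont : ContinuousOn ginv γ := by
    rw [← hgimg]; exact invFunOn_continuousOn hKcompact hgcont hginj
  have ginv_g : ∀ t ∈ K, ginv (g t) = t := fun t ht => hginj.leftInvOn_invFunOn ht
  have hmemγ : ∀ z ∈ γ, ∃ t ∈ K, g t = z := by
    intro z hz; rw [← hgimg] at hz; exact hz
  have g_ginv : ∀ z ∈ γ, g (ginv z) = z := fun z hz => Function.invFunOn_eq (hmemγ z hz)
  have ginv_mem : ∀ z ∈ γ, ginv z ∈ K := fun z hz => Function.invFunOn_mem (hmemγ z hz)
  have ginv0 : ginv 0 = 0 := by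
    have := ginv_g 0 ⟨by norm_num, by norm_num⟩
    rwa [g0] at this
  have ginv_pos : ∀ z ∈ γ₁, z ≠ 0 → 0 < ginv z := by
    intro z hz hz0
    have hzγ : z ∈ γ := Or.inl hz
    have hv := ginv_mem z hzγ
    rcases lt_trichotomy (ginv z) 0 with h | h | h
    · exfalso
      have : g (ginv z) ∈ γ₂ := gmem₂ _ hv.1 h.le
      rw [g_ginv z hzγ] at this
      have hm : z ∈ γ₁ ∩ γ₂ := ⟨hz, this⟩
      rw [hdisj] at hm
      exact hz0 hm
    · exfalso
      apply hz0
      rw [← g_ginv z hzγ, h, g0]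
    · exact h
  have ginv_neg : ∀ z ∈ γ₂, z ≠ 0 → ginv z < 0 := by
    intro z hz hz0
    have hzγ : z ∈ γ := Or.inr hz
    have hv := ginv_mem z hzγ
    rcases lt_trichotomy (ginv z) 0 with h | h | h
    · exact h
    · exfalso
      apply hz0
      rw [← g_ginv z hzγ, h, g0]
    · exfalso
      have : g (ginv z) ∈ γ₁ := gmem₁ _ h.le hv.2
      rw [g_ginv z hzγ] at this
      have hm : z ∈ γ₁ ∩ γ₂ := ⟨this, hz⟩
      rw [hdisj] at hm
      exact hz0 hm
  -- the scaled copies of γ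
  have hμ₁ : ∀ z ∈ γ₁, l⁻¹ * z ∈ γ₁ := by
    intro z hz
    obtain ⟨w, hw, hwz⟩ := hinv₁ hz
    simp only at hwz
    rw [← hwz, ← mul_assoc, inv_mul_cancel₀ hl0, one_mul]
    exact hw
  have hμ₂ : ∀ z ∈ γ₂, l⁻¹ * z ∈ γ₂ := by
    intro z hz
    obtain ⟨w, hw, hwz⟩ := hinv₂ hz
    simp only at hwz
    rw [← hwz, ← mul_assoc, inv_mul_cancel₀ hl0, one_mul]
    exact hw
  set Γa : ℕ → Set ℂ := fun k => (fun z => l⁻¹ ^ k * z) '' γ₁ with hΓadef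
  set Γb : ℕ → Set ℂ := fun k => (fun z => l⁻¹ ^ k * z) '' γ₂ with hΓbdef
  set Γ : ℕ → Set ℂ := fun k => Γa k ∪ Γb k with hΓdef
  have hΓa_succ : ∀ k, Γa (k + 1) = (fun z => l⁻¹ ^ k * z) '' ((fun z => l⁻¹ * z) '' γ₁) := by
    intro k
    rw [hΓadef]
    simp only [Set.image_image]
    apply Set.image_congr
    intro a _
    ring
  have hΓb_succ : ∀ k, Γb (k + 1) = (fun z => l⁻¹ ^ k * z) '' ((fun z => l⁻¹ * z) '' γ₂) := by
    intro k
    rw [hΓbdef]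
    simp only [Set.image_image]
    apply Set.image_congr
    intro a _
    ring
  have hΓa_sub : ∀ k, Γa k ⊆ γ₁ := by
    intro k
    induction k with
    | zero => intro z hz; obtain ⟨w, hw, hwz⟩ := hz; simpa [← hwz] using hw
    | succ n ih =>
      rw [hΓa_succ n]
      intro z hz
      obtain ⟨w, hw, hwz⟩ := hz
      obtain ⟨v, hv, hvw⟩ := hw
      apply ih
      exact ⟨w, by rw [← hvw]; exact hμ₁ v hv, hwz⟩
  have hΓb_sub : ∀ k, Γb k ⊆ γ₂ := by
    intro k
    induction k with
    | zero => intro z hz; obtain ⟨w, hw, hwz⟩ := hz; simpa [← hwz] using hw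
    | succ n ih =>
      rw [hΓb_succ n]
      intro z hz
      obtain ⟨w, hw, hwz⟩ := hz
      obtain ⟨v, hv, hvw⟩ := hw
      apply ih
      exact ⟨w, by rw [← hvw]; exact hμ₂ v hv, hwz⟩
  have hΓsub : ∀ k, Γ k ⊆ γ := by
    intro k z hz
    rcases hz with h | h
    · exact Or.inl (hΓa_sub k h)
    · exact Or.inr (hΓb_sub k h)
  have hΓmono : ∀ k, Γ (k + 1) ⊆ Γ k := by
    intro k z hz
    rcases hz with h | h
    · rw [hΓa_succ k] at h
      obtain ⟨w, hw, hwz⟩ := h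
      obtain ⟨v, hv, hvw⟩ := hw
      exact Or.inl ⟨w, by rw [← hvw]; exact hμ₁ v hv, hwz⟩
    · rw [hΓb_succ k] at h
      obtain ⟨w, hw, hwz⟩ := h
      obtain ⟨v, hv, hvw⟩ := hw
      exact Or.inr ⟨w, by rw [← hvw]; exact hμ₂ v hv, hwz⟩
  have hlk0 : ∀ k : ℕ, (l : ℂ) ^ k ≠ 0 := fun k => pow_ne_zero k hl0
  have hscale_a : ∀ (k : ℕ) (z : ℂ), z ∈ Γa k ↔ l ^ k * z ∈ γ₁ := by
    intro k z
    constructor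
    · rintro ⟨w, hw, rfl⟩
      rw [← mul_assoc, ← mul_pow, mul_inv_cancel₀ hl0, one_pow, one_mul]
      exact hw
    · intro h
      exact ⟨l ^ k * z, h, by show l⁻¹ ^ k * (l ^ k * z) = z; rw [← mul_assoc, ← mul_pow, inv_mul_cancel₀ hl0, one_pow, one_mul]⟩
  have hscale_b : ∀ (k : ℕ) (z : ℂ), z ∈ Γb k ↔ l ^ k * z ∈ γ₂ := by
    intro k z
    constructor
    · rintro ⟨w, hw, rfl⟩
      rw [← mul_assoc, ← mul_pow, mul_inv_cancel₀ hl0, one_pow, one_mul]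
      exact hw
    · intro h
      exact ⟨l ^ k * z, h, by show l⁻¹ ^ k * (l ^ k * z) = z; rw [← mul_assoc, ← mul_pow, inv_mul_cancel₀ hl0, one_pow, one_mul]⟩
  have hscale : ∀ (k : ℕ) (z : ℂ), z ∈ Γ k ↔ l ^ k * z ∈ γ := by
    intro k z
    constructor
    · rintro (h | h)
      · exact Or.inl ((hscale_a k z).mp h)
      · exact Or.inr ((hscale_b k z).mp h)
    · rintro (h | h)
      · exact Or.inl ((hscale_a k z).mpr h)
      · exact Or.inr ((hscale_b k z).mpr h)
  have h0Γ : ∀ k, (0 : ℂ) ∈ Γ k := by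
    intro k
    exact Or.inl ⟨0, h0γ₁, by simp⟩
  have hγcompact : IsCompact γ := by
    rw [← hgimg]; exact hKcompact.image_of_continuousOn hgcont
  have hγconn : IsPreconnected γ := by
    rw [← hgimg]
    exact (isPreconnected_Icc).image g hgcont
  obtain ⟨M, hM⟩ := hγcompact.isBounded.subset_closedBall 0
  have hMpos : 0 < M + 1 := by
    have := hM (Or.inl h0γ₁)
    simp [Metric.mem_closedBall] at this
    linarith
  have hγbound : ∀ z ∈ γ, ‖z‖ ≤ M := by
    intro z hz
    have := hM hz
    simpa [Metric.mem_closedBall, dist_eq_norm] using this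
  have hΓbound : ∀ (k : ℕ), ∀ z ∈ Γ k, ‖z‖ ≤ M * (‖l‖⁻¹) ^ k := by
    intro k z hz
    have hzγ : ∃ w ∈ γ, z = l⁻¹ ^ k * w := by
      rcases hz with ⟨w, hw, hwz⟩ | ⟨w, hw, hwz⟩
      · exact ⟨w, Or.inl hw, hwz.symm⟩
      · exact ⟨w, Or.inr hw, hwz.symm⟩
    obtain ⟨w, hw, rfl⟩ := hzγ
    rw [norm_mul, norm_pow, norm_inv]
    have h1 : ‖w‖ ≤ M := hγbound w hw
    have h2 : (0:ℝ) ≤ (‖l‖⁻¹) ^ k := by positivity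
    calc ‖l‖⁻¹ ^ k * ‖w‖ ≤ ‖l‖⁻¹ ^ k * M := by
          apply mul_le_mul_of_nonneg_left h1 h2
      _ = M * ‖l‖⁻¹ ^ k := by rw [mul_comm]
  -- the preimages T k of the scaled copies
  set T : ℕ → Set ℝ := fun k => ginv '' (Γ k) with hTdef
  have hTsub : ∀ k, T k ⊆ K := by
    rintro k t ⟨z, hz, rfl⟩
    exact ginv_mem z (hΓsub k hz)
  have hTmem : ∀ (k : ℕ) (t : ℝ), t ∈ K → (t ∈ T k ↔ g t ∈ Γ k) := by
    intro k t ht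
    constructor
    · rintro ⟨z, hz, rfl⟩
      rwa [g_ginv z (hΓsub k hz)]
    · intro h
      exact ⟨g t, h, ginv_g t ht⟩
  have hT0 : ∀ k, (0 : ℝ) ∈ T k := fun k => ⟨0, h0Γ k, ginv0⟩
  have hΓcompact : ∀ k, IsCompact (Γ k) := by
    intro k
    have h1 : Γ k = (fun z => l⁻¹ ^ k * z) '' γ := by
      rw [hΓdef]
      simp only [hΓadef, hΓbdef, hγdef, Set.image_union]
    rw [h1]
    exact hγcompact.image (continuous_const.mul continuous_id)
  have hΓconn : ∀ k, IsPreconnected (Γ k) := by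
    intro k
    have h1 : Γ k = (fun z => l⁻¹ ^ k * z) '' γ := by
      rw [hΓdef]
      simp only [hΓadef, hΓbdef, hγdef, Set.image_union]
    rw [h1]
    exact hγconn.image _ (continuous_const.mul continuous_id).continuousOn
  have hTcompact : ∀ k, IsCompact (T k) := by
    intro k
    exact (hΓcompact k).image_of_continuousOn (hginvcont.mono (hΓsub k))
  have hTord : ∀ k, Set.OrdConnected (T k) := by
    intro k
    exact ((hΓconn k).image ginv (hginvcont.mono (hΓsub k))).ordConnected
  have hTne : ∀ k, (T k).Nonempty := fun k => ⟨0, hT0 k⟩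
  have hTmono : ∀ k, T (k + 1) ⊆ T k := fun k => Set.image_mono (hΓmono k)
  have hT0K : T 0 = K := by
    apply Set.Subset.antisymm (hTsub 0)
    intro t ht
    rw [hTmem 0 t ht]
    have : g t ∈ γ := by rw [← hgimg]; exact ⟨t, ht, rfl⟩
    rcases this with h | h
    · exact Or.inl ⟨g t, h, by simp⟩
    · exact Or.inr ⟨g t, h, by simp⟩
  have hescape : ∀ t ∈ K, t ≠ 0 → ∃ k, t ∉ T k := by
    intro t ht ht0
    by_contra hcon
    push_neg at hcon
    have h1 : ∀ k : ℕ, ‖g t‖ ≤ M * (‖l‖⁻¹) ^ k := by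
      intro k
      exact hΓbound k (g t) ((hTmem k t ht).mp (hcon k))
    have h2 : Filter.Tendsto (fun k : ℕ => M * (‖l‖⁻¹) ^ k) Filter.atTop (nhds 0) := by
      rw [show (0:ℝ) = M * 0 by ring]
      apply Filter.Tendsto.const_mul
      apply tendsto_pow_atTop_nhds_zero_of_lt_one (by positivity)
      rw [inv_lt_one_iff₀]
      right; exact hl
    have h3 : ‖g t‖ ≤ 0 := ge_of_tendsto h2 (Filter.Eventually.of_forall h1)
    have h4 : g t = 0 := by
      have := norm_nonneg (g t)
      have : ‖g t‖ = 0 := le_antisymm h3 this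
      exact norm_eq_zero.mp this
    apply ht0
    apply hginj ht ⟨by norm_num, by norm_num⟩
    rw [h4, g0]
  -- T 1 is an interval [A, B] with A < 0 < B
  set A : ℝ := sInf (T 1) with hAdef
  set B : ℝ := sSup (T 1) with hBdef
  have hT1eq : T 1 = Set.Icc A B := by
    apply Set.Subset.antisymm
    · intro t ht
      exact ⟨csInf_le (hTcompact 1).bddBelow ht, le_csSup (hTcompact 1).bddAbove ht⟩
    · have hA : A ∈ T 1 := (hTcompact 1).sInf_mem (hTne 1)
      have hB : B ∈ T 1 := (hTcompact 1).sSup_mem (hTne 1)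
      intro t ht
      exact (hTord 1).out hA hB ht
  have hAneg : A < 0 := by
    have h1 : ξ₂ 1 ∈ γ₂ := hγ₂ ▸ ⟨1, ⟨zero_le_one, le_refl 1⟩, rfl⟩
    have h2 : ξ₂ 1 ≠ 0 := by
      intro h
      have := hi₂ ⟨zero_le_one, le_refl 1⟩ ⟨le_refl 0, zero_le_one⟩ (by rw [h, h0₂])
      norm_num at this
    have h3 : l⁻¹ * ξ₂ 1 ∈ Γb 1 := ⟨ξ₂ 1, h1, by rw [pow_one]⟩
    have h4 : l⁻¹ * ξ₂ 1 ≠ 0 := mul_ne_zero (inv_ne_zero hl0) h2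
    have h5 : l⁻¹ * ξ₂ 1 ∈ γ₂ := hΓb_sub 1 h3
    have h6 : ginv (l⁻¹ * ξ₂ 1) < 0 := ginv_neg _ h5 h4
    have h7 : ginv (l⁻¹ * ξ₂ 1) ∈ T 1 := ⟨l⁻¹ * ξ₂ 1, Or.inr h3, rfl⟩
    calc A ≤ ginv (l⁻¹ * ξ₂ 1) := csInf_le (hTcompact 1).bddBelow h7
      _ < 0 := h6
  have hBpos : 0 < B := by
    have h1 : ξ₁ 1 ∈ γ₁ := hγ₁ ▸ ⟨1, ⟨zero_le_one, le_refl 1⟩, rfl⟩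
    have h2 : ξ₁ 1 ≠ 0 := by
      intro h
      have := hi₁ ⟨zero_le_one, le_refl 1⟩ ⟨le_refl 0, zero_le_one⟩ (by rw [h, h0₁])
      norm_num at this
    have h3 : l⁻¹ * ξ₁ 1 ∈ Γa 1 := ⟨ξ₁ 1, h1, by rw [pow_one]⟩
    have h4 : l⁻¹ * ξ₁ 1 ≠ 0 := mul_ne_zero (inv_ne_zero hl0) h2
    have h5 : l⁻¹ * ξ₁ 1 ∈ γ₁ := hΓa_sub 1 h3
    have h6 : 0 < ginv (l⁻¹ * ξ₁ 1) := ginv_pos _ h5 h4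
    have h7 : ginv (l⁻¹ * ξ₁ 1) ∈ T 1 := ⟨l⁻¹ * ξ₁ 1, Or.inl h3, rfl⟩
    calc (0:ℝ) < ginv (l⁻¹ * ξ₁ 1) := h6
      _ ≤ B := le_csSup (hTcompact 1).bddAbove h7
  -- local bilipschitz estimates for g
  have hAK : A ∈ K := hTsub 1 ((hTcompact 1).sInf_mem (hTne 1))
  have hBK : B ∈ K := hTsub 1 ((hTcompact 1).sSup_mem (hTne 1))
  set Q : Set ℝ := Set.Icc (-1 : ℝ) A ∪ Set.Icc B 1 with hQdef
  have hQK : Q ⊆ K := by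
    rintro q (hq | hq)
    · exact ⟨hq.1, le_trans hq.2 (le_trans hAneg.le (by norm_num))⟩
    · exact ⟨le_trans (by norm_num : (-1:ℝ) ≤ 0) (le_trans hBpos.le hq.1), hq.2⟩
  have hQ0 : ∀ q ∈ Q, q ≠ 0 := by
    rintro q (hq | hq) rfl
    · linarith [hq.2]
    · linarith [hq.1]
  have hQcompact : IsCompact Q := isCompact_Icc.union isCompact_Icc
  have hloc : ∀ q : ℝ, ∃ δ > 0, ∃ c > 0, q ∈ Q → ∀ a b : ℝ,
      a ∈ Set.Icc (q - δ) (q + δ) → b ∈ Set.Icc (q - δ) (q + δ) → a ∈ K → b ∈ K →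
      c * |a - b| ≤ ‖g a - g b‖ ∧ ‖g a - g b‖ ≤ 3 * c * |a - b| := by
    intro q
    by_cases hqQ : q ∈ Q
    swap
    · exact ⟨1, one_pos, 1, one_pos, fun h => absurd h hqQ⟩
    have hq := hQK hqQ
    have hq0 := hQ0 q hqQ
    rcases lt_or_gt_of_ne hq0 with hneg | hpos
    · have hmem : -q ∈ Set.Ioc (0:ℝ) 1 := ⟨by linarith, by linarith [hq.1]⟩
      obtain ⟨δ, hδ, hδq, c, hc, hbil⟩ := local_bilip hs₂ hmem (hr₂ _ hmem)
      refine ⟨δ, hδ, c, hc, fun _ => ?_⟩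
      intro a b ha hb haK hbK
      have ha' : -a ∈ Set.Icc (-q - δ) (-q + δ) := ⟨by linarith [ha.2], by linarith [ha.1]⟩
      have hb' : -b ∈ Set.Icc (-q - δ) (-q + δ) := ⟨by linarith [hb.2], by linarith [hb.1]⟩
      have ha1 : -a ≤ 1 := by linarith [haK.1]
      have hb1 : -b ≤ 1 := by linarith [hbK.1]
      have haneg : a < 0 := by linarith [ha.2]
      have hbneg : b < 0 := by linarith [hb.2]
      rw [gneg a haneg, gneg b hbneg]
      have hres := hbil (-a) ha' (-b) hb' ha1 hb1
      have habs : |-a - -b| = |a - b| := by rw [show -a - -b = -(a-b) by ring, abs_neg]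
      rwa [habs] at hres
    · have hmem : q ∈ Set.Ioc (0:ℝ) 1 := ⟨hpos, hq.2⟩
      obtain ⟨δ, hδ, hδq, c, hc, hbil⟩ := local_bilip hs₁ hmem (hr₁ _ hmem)
      refine ⟨δ, hδ, c, hc, fun _ => ?_⟩
      intro a b ha hb haK hbK
      have hapos : 0 ≤ a := by linarith [ha.1]
      have hbpos : 0 ≤ b := by linarith [hb.1]
      rw [gpos a hapos, gpos b hbpos]
      exact hbil a ha b hb haK.2 hbK.2
  choose δf hδf cf hcf hbilf using hloc
  -- a uniform Lebesgue-type number for the cover of Q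
  obtain ⟨b', hb'Q, hb'fin, hb'cover⟩ := hQcompact.elim_finite_subcover_image
      (fun q (_ : q ∈ Q) => Metric.isOpen_ball (x := q) (ε := δf q / 2))
      (fun q hq => Set.mem_biUnion hq (Metric.mem_ball_self (by linarith [hδf q])))
  have hb'ne : b'.Nonempty := by
    by_contra hcon
    rw [Set.not_nonempty_iff_eq_empty] at hcon
    have h1 : (-1 : ℝ) ∈ Q := Or.inl ⟨le_refl _, hAK.1⟩
    have := hb'cover h1
    rw [hcon] at this
    simpa using this
  obtain ⟨ε, hεpos, hεprop⟩ : ∃ ε > 0, ∀ q ∈ b', ε ≤ δf q / 2 := by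
    refine ⟨hb'fin.toFinset.inf' (by simpa using hb'ne) (fun q => δf q / 2), ?_, ?_⟩
    · simp only [gt_iff_lt, Finset.lt_inf'_iff]
      intro q _
      linarith [hδf q]
    · intro q hq
      exact Finset.inf'_le _ (by simpa using hq)
  have hnear : ∀ p ∈ Q, ∃ q, q ∈ Q ∧ |p - q| < δf q / 2 ∧ ε ≤ δf q / 2 := by
    intro p hp
    have := hb'cover hp
    rw [Set.mem_iUnion₂] at this
    obtain ⟨q, hq, hball⟩ := this
    refine ⟨q, hb'Q hq, ?_, hεprop q hq⟩
    rw [← Real.dist_eq]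
    exact hball
  have hMnn : 0 ≤ M := le_trans (norm_nonneg (0:ℂ)) (hγbound 0 (Or.inl h0γ₁))
  obtain ⟨m, hmpos, hmmin⟩ : ∃ m > 0, ∀ s t : ℝ, s ∈ K → t ∈ K → ε ≤ t - s →
      m ≤ ‖g s - g t‖ := by
    set S2 : Set (ℝ × ℝ) := (K ×ˢ K) ∩ {p : ℝ × ℝ | ε ≤ p.2 - p.1} with hS2def
    have hS2closed : IsClosed S2 :=
      (isClosed_Icc.prod isClosed_Icc).inter
        (isClosed_le continuous_const (continuous_snd.sub continuous_fst))
    have hS2compact : IsCompact S2 :=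
      (hKcompact.prod hKcompact).of_isClosed_subset hS2closed Set.inter_subset_left
    have hFcont : ContinuousOn (fun p : ℝ × ℝ => ‖g p.1 - g p.2‖) S2 := by
      apply ContinuousOn.norm
      apply ContinuousOn.sub
      · exact hgcont.comp continuous_fst.continuousOn (fun p hp => hp.1.1)
      · exact hgcont.comp continuous_snd.continuousOn (fun p hp => hp.1.2)
    rcases S2.eq_empty_or_nonempty with hemp | hne
    · refine ⟨1, one_pos, ?_⟩
      intro s t hs ht hst
      exfalso
      have : (s, t) ∈ S2 := by rw [hS2def]; exact ⟨⟨hs, ht⟩, hst⟩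
      rw [hemp] at this
      exact this
    · obtain ⟨p₀, hp₀, hmin⟩ := hS2compact.exists_isMinOn hne hFcont
      have hne' : p₀.1 ≠ p₀.2 := by
        intro h
        have := hp₀.2
        simp only [Set.mem_setOf_eq, h] at this
        linarith
      have hgne : g p₀.1 ≠ g p₀.2 := fun h => hne' (hginj hp₀.1.1 hp₀.1.2 h)
      refine ⟨‖g p₀.1 - g p₀.2‖, norm_pos_iff.mpr (sub_ne_zero_of_ne hgne), ?_⟩
      intro s t hs ht hst
      have : (s, t) ∈ S2 := by rw [hS2def]; exact ⟨⟨hs, ht⟩, hst⟩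
      exact (isMinOn_iff.mp hmin) (s, t) this
  have hdiam : ∀ a b : ℝ, a ∈ K → b ∈ K → ‖g a - g b‖ ≤ 2 * M := by
    intro a b ha hb
    have h1 : ‖g a‖ ≤ M := hγbound _ (by rw [← hgimg]; exact ⟨a, ha, rfl⟩)
    have h2 : ‖g b‖ ≤ M := hγbound _ (by rw [← hgimg]; exact ⟨b, hb, rfl⟩)
    calc ‖g a - g b‖ ≤ ‖g a‖ + ‖g b‖ := norm_sub_le _ _
      _ ≤ 2 * M := by linarith
  set C₀ : ℝ := min (1/3 : ℝ) (m / (2*M + 1)) with hC₀def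
  have hC₀pos : 0 < C₀ := lt_min (by norm_num) (by positivity)
  have hC₀third : C₀ ≤ 1/3 := min_le_left _ _
  have hcore : ∀ s u t : ℝ, s ∈ K → t ∈ K → s ≤ u → u ≤ t → (s ≤ A ∨ B ≤ t) →
      C₀ * ‖g s - g u‖ ≤ ‖g s - g t‖ ∧ C₀ * ‖g u - g t‖ ≤ ‖g s - g t‖ := by
    intro s u t hsK htK hsu hut hcond
    have huK : u ∈ K := ⟨le_trans hsK.1 hsu, le_trans hut htK.2⟩
    rcases le_or_gt ε (t - s) with hfar | hcl
    · have h1 : m ≤ ‖g s - g t‖ := hmmin s t hsK htK hfar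
      have h2 : ‖g s - g u‖ ≤ 2*M + 1 := by linarith [hdiam s u hsK huK]
      have h3 : ‖g u - g t‖ ≤ 2*M + 1 := by linarith [hdiam u t huK htK]
      have hkey : ∀ x : ℝ, 0 ≤ x → x ≤ 2*M+1 → C₀ * x ≤ ‖g s - g t‖ := by
        intro x hx1 hx2
        calc C₀ * x ≤ (m / (2*M + 1)) * (2*M+1) := by
              apply mul_le_mul (min_le_right _ _) hx2 hx1 (by positivity)
          _ = m := by field_simp
          _ ≤ ‖g s - g t‖ := h1
      exact ⟨hkey _ (norm_nonneg _) h2, hkey _ (norm_nonneg _) h3⟩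
    · obtain ⟨p, hpQ, hps, hpt⟩ : ∃ p, p ∈ Q ∧ s ≤ p ∧ p ≤ t := by
        rcases hcond with h | h
        · exact ⟨s, Or.inl ⟨hsK.1, h⟩, le_refl s, le_trans hsu hut⟩
        · exact ⟨t, Or.inr ⟨h, htK.2⟩, le_trans hsu hut, le_refl t⟩
      obtain ⟨q, hqQ, hqball, hqε⟩ := hnear p hpQ
      have hball : ∀ x : ℝ, s ≤ x → x ≤ t → x ∈ Set.Icc (q - δf q) (q + δf q) := by
        intro x h1 h2
        have hxp : |x - p| ≤ t - s := by
          rw [abs_le]; constructor <;> linarith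
        have htri : |x - q| ≤ |x - p| + |p - q| := by
          calc |x - q| = |(x - p) + (p - q)| := by ring_nf
            _ ≤ |x - p| + |p - q| := abs_add_le _ _
        have hfin : |x - q| < δf q := by
          calc |x - q| ≤ |x - p| + |p - q| := htri
            _ < (t - s) + δf q / 2 := by linarith [hqball]
            _ < ε + δf q / 2 := by linarith
            _ ≤ δf q / 2 + δf q / 2 := by linarith
            _ = δf q := by ring
        rw [abs_lt] at hfin
        exact ⟨by linarith [hfin.1], by linarith [hfin.2]⟩
      have hbil := hbilf q hqQ
      have hst := hbil s t (hball s (le_refl s) (le_trans hsu hut))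
        (hball t (le_trans hsu hut) (le_refl t)) hsK htK
      have hsu' := hbil s u (hball s (le_refl s) (le_trans hsu hut))
        (hball u hsu hut) hsK huK
      have hut' := hbil u t (hball u hsu hut)
        (hball t (le_trans hsu hut) (le_refl t)) huK htK
      have habs_st : |s - t| = t - s := by rw [abs_sub_comm, abs_of_nonneg (by linarith)]
      have habs_su : |s - u| = u - s := by rw [abs_sub_comm, abs_of_nonneg (by linarith)]
      have habs_ut : |u - t| = t - u := by rw [abs_sub_comm, abs_of_nonneg (by linarith)]
      have hlow : cf q * (t - s) ≤ ‖g s - g t‖ := by rw [← habs_st]; exact hst.1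
      have hup_su : ‖g s - g u‖ ≤ 3 * cf q * (u - s) := by rw [← habs_su]; exact hsu'.2
      have hup_ut : ‖g u - g t‖ ≤ 3 * cf q * (t - u) := by rw [← habs_ut]; exact hut'.2
      have hcq := hcf q
      constructor
      · calc C₀ * ‖g s - g u‖ ≤ (1/3) * (3 * cf q * (u - s)) := by
              apply mul_le_mul hC₀third hup_su (norm_nonneg _) (by norm_num)
          _ = cf q * (u - s) := by ring
          _ ≤ cf q * (t - s) := by nlinarith
          _ ≤ ‖g s - g t‖ := hlow
      · calc C₀ * ‖g u - g t‖ ≤ (1/3) * (3 * cf q * (t - u)) := by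
              apply mul_le_mul hC₀third hup_ut (norm_nonneg _) (by norm_num)
          _ = cf q * (t - u) := by ring
          _ ≤ cf q * (t - s) := by nlinarith
          _ ≤ ‖g s - g t‖ := hlow
  -- every T k is a closed interval
  have hTIcc : ∀ k, T k = Set.Icc (sInf (T k)) (sSup (T k)) := by
    intro k
    apply Set.Subset.antisymm
    · intro t ht
      exact ⟨csInf_le (hTcompact k).bddBelow ht, le_csSup (hTcompact k).bddAbove ht⟩
    · have hA : sInf (T k) ∈ T k := (hTcompact k).sInf_mem (hTne k)
      have hB : sSup (T k) ∈ T k := (hTcompact k).sSup_mem (hTne k)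
      intro t ht
      exact (hTord k).out hA hB ht
  -- shifting the scaled copies
  have hΓshift : ∀ (k : ℕ) (z : ℂ), z ∈ Γ (k+1) ↔ l ^ k * z ∈ Γ 1 := by
    intro k z
    rw [hscale (k+1) z, hscale 1 (l ^ k * z)]
    rw [show l ^ 1 * (l ^ k * z) = l ^ (k+1) * z by ring]
  -- nonvanishing of g away from 0
  have hgne0 : ∀ x ∈ K, x ≠ 0 → g x ≠ 0 := by
    intro x hx hx0 h
    exact hx0 (hginj hx ⟨by norm_num, by norm_num⟩ (by rw [h, g0]))
  -- membership of nonzero points in the correct arc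
  have hgγ₁ : ∀ x ∈ K, 0 < x → ∀ k, g x ∈ Γ k → l ^ k * g x ∈ γ₁ ∧ l ^ k * g x ≠ 0 := by
    intro x hx hx0 k hΓ
    have h1 : g x ∈ γ₁ := gmem₁ x hx0.le hx.2
    have h2 : g x ≠ 0 := hgne0 x hx (ne_of_gt hx0)
    have h3 : g x ∈ Γa k := by
      rcases hΓ with h | h
      · exact h
      · exfalso
        have : g x ∈ γ₁ ∩ γ₂ := ⟨h1, hΓb_sub k h⟩
        rw [hdisj] at this
        exact h2 this
    exact ⟨(hscale_a k _).mp h3, mul_ne_zero (hlk0 k) h2⟩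
  have hgγ₂ : ∀ x ∈ K, x < 0 → ∀ k, g x ∈ Γ k → l ^ k * g x ∈ γ₂ ∧ l ^ k * g x ≠ 0 := by
    intro x hx hx0 k hΓ
    have h1 : g x ∈ γ₂ := gmem₂ x hx.1 hx0.le
    have h2 : g x ≠ 0 := hgne0 x hx (ne_of_lt hx0)
    have h3 : g x ∈ Γb k := by
      rcases hΓ with h | h
      · exfalso
        have : g x ∈ γ₁ ∩ γ₂ := ⟨hΓa_sub k h, h1⟩
        rw [hdisj] at this
        exact h2 this
      · exact h
    exact ⟨(hscale_b k _).mp h3, mul_ne_zero (hlk0 k) h2⟩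
  -- the global bounded-turning estimate
  have hglobal : ∀ s u t : ℝ, s ∈ K → t ∈ K → s ≤ u → u ≤ t →
      C₀ * ‖g s - g u‖ ≤ ‖g s - g t‖ ∧ C₀ * ‖g u - g t‖ ≤ ‖g s - g t‖ := by
    intro s u t hsK htK hsu hut
    rcases eq_or_lt_of_le (le_trans hsu hut) with heq | hst
    · have h1 : u = s := le_antisymm (heq ▸ hut) hsu
      rw [h1, ← heq]
      simp
    · -- s < t ; find the maximal k with s, t ∈ T k
      have hPex : ∃ k, ¬(s ∈ T k ∧ t ∈ T k) := by
        rcases eq_or_ne t 0 with rfl | ht0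
        · have hs0 : s ≠ 0 := ne_of_lt hst
          obtain ⟨k, hk⟩ := hescape s hsK hs0
          exact ⟨k, fun hc => hk hc.1⟩
        · obtain ⟨k, hk⟩ := hescape t htK ht0
          exact ⟨k, fun hc => hk hc.2⟩
      obtain ⟨k, hPk, hPk1⟩ : ∃ k, (s ∈ T k ∧ t ∈ T k) ∧ ¬(s ∈ T (k+1) ∧ t ∈ T (k+1)) := by
        have hn := Nat.find_spec hPex
        have h00 : s ∈ T 0 ∧ t ∈ T 0 := by rw [hT0K]; exact ⟨hsK, htK⟩
        have hn0 : Nat.find hPex ≠ 0 := by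
          intro h
          rw [h] at hn
          exact hn h00
        obtain ⟨k, hkeq⟩ : ∃ k, Nat.find hPex = k + 1 :=
          ⟨Nat.find hPex - 1, (Nat.succ_pred_eq_of_ne_zero hn0).symm⟩
        refine ⟨k, ?_, by rw [← hkeq]; exact hn⟩
        by_contra hc
        exact (Nat.find_min hPex (by rw [hkeq]; exact Nat.lt_succ_self k)) hc
      have hsT := hPk.1
      have htT := hPk.2
      have huT : u ∈ T k := (hTord k).out hsT htT ⟨hsu, hut⟩
      -- the rescaling map w
      obtain ⟨w, hwdef⟩ : ∃ w : ℝ → ℝ, w = fun x => ginv (l ^ k * g x) := ⟨_, rfl⟩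
      have hTg : ∀ x ∈ T k, g x ∈ Γ k := fun x hx => (hTmem k x (hTsub k hx)).mp hx
      have hwγ : ∀ x ∈ T k, l ^ k * g x ∈ γ := fun x hx => (hscale k (g x)).mp (hTg x hx)
      have hwK : ∀ x ∈ T k, w x ∈ K := by
        intro x hx; rw [hwdef]; exact ginv_mem _ (hwγ x hx)
      have hgw : ∀ x ∈ T k, g (w x) = l ^ k * g x := by
        intro x hx; rw [hwdef]; exact g_ginv _ (hwγ x hx)
      have hw0 : w 0 = 0 := by rw [hwdef]; simp [g0, ginv0]
      have hwcont : ContinuousOn w (T k) := by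
        rw [hwdef]
        apply hginvcont.comp (continuousOn_const.mul (hgcont.mono (hTsub k)))
        intro x hx
        exact hwγ x hx
      have hwinj : Set.InjOn w (T k) := by
        intro a ha b hb hab
        have h1 : g (w a) = g (w b) := by rw [hab]
        rw [hgw a ha, hgw b hb] at h1
        have h2 : g a = g b := mul_left_cancel₀ (hlk0 k) h1
        exact hginj (hTsub k ha) (hTsub k hb) h2
      have hwpos : ∀ x ∈ T k, 0 < x → 0 < w x := by
        intro x hx hx0
        obtain ⟨h1, h2⟩ := hgγ₁ x (hTsub k hx) hx0 k (hTg x hx)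
        rw [hwdef]
        exact ginv_pos _ h1 h2
      have hwneg : ∀ x ∈ T k, x < 0 → w x < 0 := by
        intro x hx hx0
        obtain ⟨h1, h2⟩ := hgγ₂ x (hTsub k hx) hx0 k (hTg x hx)
        rw [hwdef]
        exact ginv_neg _ h1 h2
      -- w is strictly monotone on T k
      have h0T : (0:ℝ) ∈ T k := hT0 k
      have hak : sInf (T k) ≤ 0 := csInf_le (hTcompact k).bddBelow h0T
      have hbk : 0 ≤ sSup (T k) := le_csSup (hTcompact k).bddAbove h0T
      have hwmono : StrictMonoOn w (T k) := by
        rw [hTIcc k] at hwcont hwinj ⊢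
        rcases ContinuousOn.strictMonoOn_of_injOn_Icc' (le_trans hak hbk) hwcont hwinj
          with hmono | hanti
        · exact hmono
        · exfalso
          have h0I : (0:ℝ) ∈ Set.Icc (sInf (T k)) (sSup (T k)) := ⟨hak, hbk⟩
          rcases lt_or_ge 0 (sSup (T k)) with hbk' | hbk'
          · have hBT : sSup (T k) ∈ T k := (hTcompact k).sSup_mem (hTne k)
            have h1 : 0 < w (sSup (T k)) := hwpos _ hBT hbk'
            have h2 : w (sSup (T k)) < w 0 := hanti h0I (by rw [← hTIcc k]; exact hBT) hbk'
            rw [hw0] at h2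
            linarith
          · have hsneg : s < 0 := by
              have h1 : t ≤ sSup (T k) := le_csSup (hTcompact k).bddAbove htT
              linarith
            have hak' : sInf (T k) < 0 := by
              have h1 : sInf (T k) ≤ s := csInf_le (hTcompact k).bddBelow hsT
              linarith
            have hAT : sInf (T k) ∈ T k := (hTcompact k).sInf_mem (hTne k)
            have h1 : w (sInf (T k)) < 0 := hwneg _ hAT hak'
            have h2 : w 0 < w (sInf (T k)) := hanti (by rw [← hTIcc k]; exact hAT) h0I hak'
            rw [hw0] at h2
            linarith
      have hws : w s ≤ w u := hwmono.monotoneOn hsT huT hsu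
      have hwu : w u ≤ w t := hwmono.monotoneOn huT htT hut
      -- the shifted memberships
      have hshift : ∀ x ∈ T k, (x ∈ T (k+1) ↔ w x ∈ T 1) := by
        intro x hx
        rw [hTmem (k+1) x (hTsub k hx), hTmem 1 (w x) (hwK x hx), hgw x hx]
        exact hΓshift k (g x)
      have hcond : w s ≤ A ∨ B ≤ w t := by
        push_neg at hPk1
        by_cases hsT1 : s ∈ T (k+1)
        · -- then t ∉ T (k+1)
          have htT1 : t ∉ T (k+1) := hPk1 hsT1
          have h1 : w t ∉ T 1 := fun h => htT1 ((hshift t htT).mpr h)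
          rw [hT1eq] at h1
          rcases not_and_or.mp (by rwa [Set.mem_Icc] at h1) with h | h
          · left
            push_neg at h
            calc w s ≤ w t := le_trans hws hwu
              _ ≤ A := h.le
          · right
            push_neg at h
            exact h.le
        · have h1 : w s ∉ T 1 := fun h => hsT1 ((hshift s hsT).mpr h)
          rw [hT1eq] at h1
          rcases not_and_or.mp (by rwa [Set.mem_Icc] at h1) with h | h
          · left
            push_neg at h
            exact h.le
          · right
            push_neg at h
            calc B ≤ w s := h.le
              _ ≤ w t := le_trans hws hwu
      have hres := hcore (w s) (w u) (w t) (hwK s hsT) (hwK t htT) hws hwu hcond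
      rw [hgw s hsT, hgw u huT, hgw t htT] at hres
      have hnorm : ∀ a b : ℂ, ‖l ^ k * a - l ^ k * b‖ = ‖(l:ℂ)^k‖ * ‖a - b‖ := by
        intro a b
        rw [← mul_sub, norm_mul]
      rw [hnorm (g s) (g u), hnorm (g s) (g t), hnorm (g u) (g t)] at hres
      have hpow : 0 < ‖(l:ℂ) ^ k‖ := norm_pos_iff.mpr (hlk0 k)
      constructor
      · have h1 := hres.1
        rw [show C₀ * (‖(l:ℂ)^k‖ * ‖g s - g u‖) = ‖(l:ℂ)^k‖ * (C₀ * ‖g s - g u‖) by ring]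
          at h1
        exact le_of_mul_le_mul_left h1 hpow
      · have h2 := hres.2
        rw [show C₀ * (‖(l:ℂ)^k‖ * ‖g u - g t‖) = ‖(l:ℂ)^k‖ * (C₀ * ‖g u - g t‖) by ring]
          at h2
        exact le_of_mul_le_mul_left h2 hpow
  -- conclusion: any parameterization of γ is g composed with a monotone map
  refine ⟨C₀, hC₀pos, ?_⟩
  intro ξ hξc hξi hξimg x y z hx hxy hyz hz1
  have hxI : x ∈ Set.Icc (0:ℝ) 1 := ⟨hx, by linarith⟩
  have hyI : y ∈ Set.Icc (0:ℝ) 1 := ⟨by linarith, by linarith⟩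
  have hzI : z ∈ Set.Icc (0:ℝ) 1 := ⟨by linarith, hz1⟩
  have hξmem : ∀ v ∈ Set.Icc (0:ℝ) 1, ξ v ∈ γ := by
    intro v hv
    rw [← hξimg]
    exact ⟨v, hv, rfl⟩
  obtain ⟨h, hhdef⟩ : ∃ h : ℝ → ℝ, h = fun v => ginv (ξ v) := ⟨_, rfl⟩
  have hgh : ∀ v ∈ Set.Icc (0:ℝ) 1, g (h v) = ξ v := by
    intro v hv
    rw [hhdef]
    exact g_ginv _ (hξmem v hv)
  have hhK : ∀ v ∈ Set.Icc (0:ℝ) 1, h v ∈ K := by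
    intro v hv
    rw [hhdef]
    exact ginv_mem _ (hξmem v hv)
  have hhcont : ContinuousOn h (Set.Icc (0:ℝ) 1) := by
    rw [hhdef]
    exact hginvcont.comp hξc hξmem
  have hhinj : Set.InjOn h (Set.Icc (0:ℝ) 1) := by
    intro a ha b hb hab
    have h1 : g (h a) = g (h b) := by rw [hab]
    rw [hgh a ha, hgh b hb] at h1
    exact hξi ha hb h1
  rcases ContinuousOn.strictMonoOn_of_injOn_Icc' zero_le_one hhcont hhinj with hmono | hanti
  · have h1 := hglobal (h x) (h y) (h z) (hhK x hxI) (hhK z hzI)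
      (hmono.monotoneOn hxI hyI hxy) (hmono.monotoneOn hyI hzI hyz)
    rw [hgh x hxI, hgh y hyI, hgh z hzI] at h1
    exact h1.1
  · have h1 := hglobal (h z) (h y) (h x) (hhK z hzI) (hhK x hxI)
      (hanti.antitoneOn hyI hzI hyz) (hanti.antitoneOn hxI hyI hxy)
    rw [hgh x hxI, hgh y hyI, hgh z hzI] at h1
    have h2 := h1.2
    rwa [norm_sub_rev (ξ y) (ξ x), norm_sub_rev (ξ z) (ξ x)] at h2
end

section
/- Let Ω ⊂ ℂⁿ be a domain and F = (F₁, …, Fₙ) : Ω → ℂⁿ a holomorphic map with an isolated zero at z₀ ∈ Ω. For each 1 ≤ k ≤ n let X_k = ∩_{j≠k} F_j⁻¹(0) and choose a univalent holomorphic map φ_k : 𝔻 → X_k with φ_k(0) = z₀. Then F is a local diffeomorphism near z₀ if and only if (F_k ∘ φ_k)'(0) ≠ 0 for all 1 ≤ k ≤ n. -/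
open Metric Set Filter Complex
open scoped Topology Real

/-- A holomorphic function injective near `0` has nonzero derivative at `0`. -/
lemma injOn_deriv_ne_zero {ψ : ℂ → ℂ} {r : ℝ} (hr : 0 < r)
    (hψ : AnalyticAt ℂ ψ 0) (hinj : Set.InjOn ψ (Metric.ball 0 r)) :
    deriv ψ 0 ≠ 0 := by
  intro h0
  have hsub : AnalyticAt ℂ (fun z => ψ z - ψ 0) 0 := hψ.sub analyticAt_const
  -- the order of ψ - ψ 0 is not ⊤
  have hot : analyticOrderAt (fun z => ψ z - ψ 0) 0 ≠ ⊤ := by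
    intro ht
    have hev : ∀ᶠ z in 𝓝 (0:ℂ), ψ z - ψ 0 = 0 := analyticOrderAt_eq_top.mp ht
    have hev2 : ∀ᶠ z in 𝓝 (0:ℂ), z ∈ Metric.ball (0:ℂ) r := ball_mem_nhds _ hr
    have h3 : ∀ᶠ z in 𝓝[≠] (0:ℂ), (ψ z - ψ 0 = 0 ∧ z ∈ Metric.ball (0:ℂ) r) ∧ z ≠ 0 :=
      (((hev.and hev2).filter_mono nhdsWithin_le_nhds).and self_mem_nhdsWithin)
    obtain ⟨z, ⟨hz1, hz2⟩, hz3⟩ := h3.exists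
    exact hz3 (hinj hz2 (mem_ball_self hr) (by linear_combination hz1))
  set m := (analyticOrderAt (fun z => ψ z - ψ 0) 0).toNat with hmdef
  have hm : analyticOrderAt (fun z => ψ z - ψ 0) 0 = m := (ENat.coe_toNat hot).symm
  obtain ⟨g, hg, hg0, hev⟩ := (hsub.analyticOrderAt_eq_natCast (n := m)).mp hm
  have hev' : ∀ᶠ z in 𝓝 (0:ℂ), ψ z = ψ 0 + z ^ m * g z := by
    filter_upwards [hev] with z hz
    simp only [sub_zero, smul_eq_mul] at hz
    linear_combination hz
  -- m ≠ 0
  have hm0 : m ≠ 0 := by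
    intro h
    have := hev'.self_of_nhds
    rw [h] at this
    simp at this
    exact hg0 this
  -- m ≠ 1
  have hm1 : m ≠ 1 := by
    intro h
    have hgd : HasDerivAt g (deriv g 0) 0 := hg.differentiableAt.hasDerivAt
    have hd : HasDerivAt (fun z : ℂ => ψ 0 + z ^ m * g z) (g 0) 0 := by
      rw [h]
      have := ((hasDerivAt_id (0:ℂ)).mul hgd).const_add (ψ 0)
      simpa using this
    have : deriv ψ 0 = g 0 := by
      rw [Filter.EventuallyEq.deriv_eq hev']
      exact hd.deriv
    exact hg0 (by rw [← this, h0])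
  have hm2 : 2 ≤ m := by omega
  have hmC : (m : ℂ) ≠ 0 := Nat.cast_ne_zero.mpr hm0
  -- m-th root of g
  set c : ℂ := Complex.exp (Complex.log (g 0) / m) with hcdef
  have hc : c ^ m = g 0 := by
    rw [hcdef, ← Complex.exp_nat_mul, mul_div_cancel₀ _ hmC, Complex.exp_log hg0]
  have hcne : c ≠ 0 := Complex.exp_ne_zero _
  set ρ : ℂ → ℂ := fun z => c * Complex.exp (Complex.log (g z / g 0) / m) with hρdef
  have hρa : AnalyticAt ℂ ρ 0 := by
    have h1 : AnalyticAt ℂ (fun z => g z / g 0) 0 := hg.div analyticAt_const hg0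
    have h2 : AnalyticAt ℂ (fun z => Complex.log (g z / g 0)) 0 := by
      have hsl : g 0 / g 0 ∈ Complex.slitPlane := by
        rw [div_self hg0]; exact Complex.one_mem_slitPlane
      exact h1.clog hsl
    exact analyticAt_const.mul ((h2.div analyticAt_const hmC).cexp)
  have hρ0 : ρ 0 = c := by
    simp [hρdef, div_self hg0, Complex.log_one]
  have hgne : ∀ᶠ z in 𝓝 (0:ℂ), g z ≠ 0 := hg.continuousAt.eventually_ne hg0
  have hρm : ∀ᶠ z in 𝓝 (0:ℂ), ρ z ^ m = g z := by
    filter_upwards [hgne] with z hz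
    rw [hρdef]
    rw [mul_pow, hc, ← Complex.exp_nat_mul, mul_div_cancel₀ _ hmC,
      Complex.exp_log (div_ne_zero hz hg0), mul_div_cancel₀ _ hg0]
  set h : ℂ → ℂ := fun z => z * ρ z with hhdef
  have hha : AnalyticAt ℂ h 0 := analyticAt_id.mul hρa
  have hh0 : h 0 = 0 := by simp [hhdef]
  have hψh : ∀ᶠ z in 𝓝 (0:ℂ), ψ z = ψ 0 + h z ^ m := by
    filter_upwards [hev', hρm] with z h1 h2
    rw [hhdef, mul_pow, h2, h1]
  -- open mapping for h
  have hρne : ∀ᶠ z in 𝓝 (0:ℂ), ρ z ≠ 0 := by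
    have := hρa.continuousAt.eventually_ne (by rw [hρ0]; exact hcne)
    exact this
  rcases hha.eventually_constant_or_nhds_le_map_nhds with hconst | hmap
  · exfalso
    have h3 : ∀ᶠ z in 𝓝[≠] (0:ℂ), (h z = h 0 ∧ ρ z ≠ 0) ∧ z ≠ 0 :=
      (((hconst.and hρne).filter_mono nhdsWithin_le_nhds).and self_mem_nhdsWithin)
    obtain ⟨z, ⟨hz1, hz2⟩, hz3⟩ := h3.exists
    rw [hh0, hhdef] at hz1
    simp only [mul_eq_zero] at hz1
    tauto
  · rw [hh0] at hmap
    -- the good neighborhood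
    have hU : {z : ℂ | ψ z = ψ 0 + h z ^ m} ∩ Metric.ball (0:ℂ) r ∈ 𝓝 (0:ℂ) :=
      Filter.inter_mem hψh (ball_mem_nhds _ hr)
    have himg : h '' ({z : ℂ | ψ z = ψ 0 + h z ^ m} ∩ Metric.ball (0:ℂ) r) ∈ 𝓝 (0:ℂ) :=
      hmap (Filter.image_mem_map hU)
    obtain ⟨ε, hε, hball⟩ := Metric.mem_nhds_iff.mp himg
    -- root of unity
    set ζ : ℂ := Complex.exp (2 * (π:ℂ) * Complex.I / m) with hζdef
    have hζm : ζ ^ m = 1 := by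
      rw [hζdef, ← Complex.exp_nat_mul, mul_div_cancel₀ _ hmC, Complex.exp_two_pi_mul_I]
    have hζ1 : ζ ≠ 1 := by
      intro hζ
      obtain ⟨k, hk⟩ := Complex.exp_eq_one_iff.mp (hζdef ▸ hζ)
      have h2pi : (2 * (π:ℂ) * Complex.I) ≠ 0 := by
        simp [Real.pi_ne_zero, Complex.I_ne_zero, Complex.ofReal_ne_zero]
      have hkm : (k:ℂ) * m = 1 := by
        have h1 : (2*(π:ℂ)*Complex.I) * 1 = (2*(π:ℂ)*Complex.I) * ((k:ℂ)*m) := by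
          rw [mul_one]
          have h2 := congrArg (fun z : ℂ => z * m) hk
          rw [div_mul_cancel₀ _ hmC] at h2
          linear_combination h2
        exact (mul_left_cancel₀ h2pi h1).symm
      have hkmZ : k * (m:ℤ) = 1 := by exact_mod_cast hkm
      have hdvd : (m:ℤ) ∣ 1 := ⟨k, by rw [← hkmZ]; ring⟩
      have := Int.le_of_dvd one_pos hdvd
      omega
    -- pick w and ζ * w in the image of h
    set a : ℝ := ‖ζ‖ with hadef
    have ha : 0 ≤ a := norm_nonneg ζ
    set t : ℝ := ε / 2 / (1 + a) with htdef
    have htpos : 0 < t := by positivity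
    have h2 : (1 + a) * t = ε / 2 := by
      rw [htdef]; field_simp
    have hta : a * t < ε := by
      have h1 : a * t ≤ (1 + a) * t := by nlinarith
      nlinarith
    have htε : t < ε := by nlinarith
    have hw0 : (t : ℂ) ≠ 0 := by
      simpa using htpos.ne'
    have hwmem : (t : ℂ) ∈ Metric.ball (0:ℂ) ε := by
      simp only [Metric.mem_ball, Complex.dist_eq, sub_zero, Complex.norm_real, Real.norm_eq_abs]
      rwa [abs_of_pos htpos]
    have hζwmem : ζ * t ∈ Metric.ball (0:ℂ) ε := by
      simp only [Metric.mem_ball, Complex.dist_eq, sub_zero, norm_mul, Complex.norm_real, Real.norm_eq_abs]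
      rw [abs_of_pos htpos]
      exact hta
    obtain ⟨z₁, hz₁U, hz₁⟩ := hball hwmem
    obtain ⟨z₂, hz₂U, hz₂⟩ := hball hζwmem
    have hne : z₁ ≠ z₂ := by
      intro he
      rw [he, hz₂] at hz₁
      have : ζ = 1 := by
        field_simp at hz₁
        tauto
      exact hζ1 this
    have e₁ : ψ z₁ = ψ 0 + (t:ℂ) ^ m := by
      have := hz₁U.1
      simp only [Set.mem_setOf_eq] at this
      rw [this, hz₁]
    have e₂ : ψ z₂ = ψ 0 + (t:ℂ) ^ m := by
      have := hz₂U.1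
      simp only [Set.mem_setOf_eq] at this
      rw [this, hz₂, mul_pow, hζm, one_mul]
    exact hne (hinj hz₁U.2 hz₂U.2 (by rw [e₁, e₂]))

lemma fderiv_close {n : ℕ} {Ω : Set (Fin n → ℂ)} (hΩo : IsOpen Ω)
    {F : (Fin n → ℂ) → (Fin n → ℂ)} (hF : DifferentiableOn ℂ F Ω)
    {z₀ : Fin n → ℂ} (hz₀ : z₀ ∈ Ω) {ε : ℝ} (hε : 0 < ε) :
    ∃ δ > 0, Metric.ball z₀ δ ⊆ Ω ∧
      ∀ z ∈ Metric.ball z₀ δ, ‖fderiv ℂ F z - fderiv ℂ F z₀‖ ≤ ε := by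
  obtain ⟨r, hrpos, hrΩ⟩ := Metric.isOpen_iff.mp hΩo z₀ hz₀
  set R : ℝ := r / 3 with hRdef
  have hR : 0 < R := by positivity
  have hRΩ : Metric.closedBall z₀ (2 * R) ⊆ Ω := by
    refine Subset.trans ?_ hrΩ
    intro x hx
    simp only [Metric.mem_closedBall] at hx
    simp only [Metric.mem_ball]
    have : 2 * R < r := by rw [hRdef]; linarith
    linarith
  have hcomp : IsCompact (Metric.closedBall z₀ (2 * R)) := isCompact_closedBall _ _
  have hFc : ContinuousOn F (Metric.closedBall z₀ (2 * R)) := hF.continuousOn.mono hRΩ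
  have huc := hcomp.uniformContinuousOn_of_continuous hFc
  rw [Metric.uniformContinuousOn_iff] at huc
  obtain ⟨δ₀, hδ₀, hucd⟩ := huc (ε * R / 4) (by positivity)
  refine ⟨min δ₀ R, by positivity, ?_, ?_⟩
  · intro x hx
    apply hRΩ
    simp only [Metric.mem_ball] at hx
    simp only [Metric.mem_closedBall]
    have := lt_min_iff.mp hx
    nlinarith
  intro z hz
  simp only [Metric.mem_ball] at hz
  obtain ⟨hzδ₀, hzR⟩ := lt_min_iff.mp hz
  have hzΩ : ∀ t : ℂ, ∀ u : Fin n → ℂ, ‖u‖ = 1 → t ∈ Metric.ball (0:ℂ) R →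
      z + t • u ∈ Metric.closedBall z₀ (2 * R) ∧ z₀ + t • u ∈ Metric.closedBall z₀ (2 * R) := by
    intro t u hu ht
    simp only [Metric.mem_ball, Complex.dist_eq, sub_zero] at ht
    constructor
    · simp only [Metric.mem_closedBall, dist_eq_norm]
      have : ‖z + t • u - z₀‖ ≤ ‖z - z₀‖ + ‖t • u‖ := by
        have : z + t • u - z₀ = (z - z₀) + t • u := by ring
        rw [this]; exact norm_add_le _ _
      rw [norm_smul, hu] at this
      simp only [mul_one] at this
      have h1 : ‖z - z₀‖ < R := by rwa [← dist_eq_norm]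
      nlinarith [this]
    · simp only [Metric.mem_closedBall, dist_eq_norm]
      have : z₀ + t • u - z₀ = t • u := by ring
      rw [this, norm_smul, hu]
      simp only [mul_one]
      nlinarith
  have key : ∀ u : Fin n → ℂ, ‖u‖ = 1 →
      ‖(fderiv ℂ F z - fderiv ℂ F z₀) u‖ ≤ ε := by
    intro u hu
    set g : ℂ → (Fin n → ℂ) := fun t => F (z + t • u) - F (z₀ + t • u) with hgdef
    have hdiffat : ∀ w ∈ Metric.closedBall z₀ (2*R), DifferentiableAt ℂ F w :=
      fun w hw => hF.differentiableAt (hΩo.mem_nhds (hRΩ hw))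
    have hcurve : ∀ (w : Fin n → ℂ) (t : ℂ), HasDerivAt (fun s : ℂ => w + s • u) u t := by
      intro w t
      simpa using ((hasDerivAt_id t).smul_const u).const_add w
    have hgd : DifferentiableOn ℂ g (Metric.ball (0:ℂ) R) := by
      intro t ht
      obtain ⟨h1, h2⟩ := hzΩ t u hu ht
      exact (((hdiffat _ h1).hasFDerivAt.comp_hasDerivAt t (hcurve z t)).sub
        ((hdiffat _ h2).hasFDerivAt.comp_hasDerivAt t (hcurve z₀ t))).differentiableAt.differentiableWithinAt
    have hgmaps : MapsTo g (Metric.ball (0:ℂ) R) (Metric.ball (g 0) (ε * R / 2)) := by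
      intro t ht
      have hb : ∀ s : ℂ, s ∈ Metric.ball (0:ℂ) R → ‖g s‖ < ε * R / 4 := by
        intro s hs
        obtain ⟨h1, h2⟩ := hzΩ s u hu hs
        have hd : dist (z + s • u) (z₀ + s • u) < δ₀ := by
          have : dist (z + s • u) (z₀ + s • u) = dist z z₀ := by
            simp [dist_eq_norm]
          rw [this]; exact hzδ₀
        have := hucd _ h1 _ h2 hd
        rwa [dist_eq_norm] at this
      have h0 : (0:ℂ) ∈ Metric.ball (0:ℂ) R := mem_ball_self hR
      have := norm_sub_le (g t) (g 0)
      simp only [Metric.mem_ball]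
      rw [dist_eq_norm]
      have h1 := hb t ht
      have h2 := hb 0 h0
      calc ‖g t - g 0‖ ≤ ‖g t‖ + ‖g 0‖ := norm_sub_le _ _
        _ < ε * R / 2 := by linarith
    have hschwarz := Complex.norm_deriv_le_div_of_mapsTo_ball hgd (hgmaps.mono_right Metric.ball_subset_closedBall) hR
    have hzmem : z ∈ Metric.closedBall z₀ (2 * R) := by
      simp only [Metric.mem_closedBall]
      nlinarith [hzR]
    have hz₀mem : z₀ ∈ Metric.closedBall z₀ (2 * R) := by
      simp only [Metric.mem_closedBall, dist_self]
      positivity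
    have hg0' : HasDerivAt g (fderiv ℂ F z u - fderiv ℂ F z₀ u) 0 := by
      have e1 : HasDerivAt (fun t : ℂ => F (z + t • u)) (fderiv ℂ F z u) 0 := by
        have hd : HasFDerivAt F (fderiv ℂ F z) (z + (0:ℂ) • u) := by
          simpa using (hdiffat z hzmem).hasFDerivAt
        exact hd.comp_hasDerivAt 0 (hcurve z 0)
      have e2 : HasDerivAt (fun t : ℂ => F (z₀ + t • u)) (fderiv ℂ F z₀ u) 0 := by
        have hd : HasFDerivAt F (fderiv ℂ F z₀) (z₀ + (0:ℂ) • u) := by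
          simpa using (hdiffat z₀ hz₀mem).hasFDerivAt
        exact hd.comp_hasDerivAt 0 (hcurve z₀ 0)
      exact e1.sub e2
    have : ‖fderiv ℂ F z u - fderiv ℂ F z₀ u‖ ≤ (ε * R / 2) / R := by
      rw [← hg0'.deriv]; exact hschwarz
    have hRR : (ε * R / 2) / R = ε / 2 := by field_simp
    rw [hRR] at this
    simp only [ContinuousLinearMap.sub_apply]
    linarith
  apply ContinuousLinearMap.opNorm_le_bound _ hε.le
  intro v
  rcases eq_or_ne v 0 with rfl | hv
  · simp
  · have hnv : ‖v‖ ≠ 0 := norm_ne_zero_iff.mpr hv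
    set u : Fin n → ℂ := (‖v‖ : ℂ)⁻¹ • v with hudef
    have hu : ‖u‖ = 1 := by
      rw [hudef, norm_smul]
      simp [Complex.norm_real, inv_mul_cancel₀ hnv]
    have hvu : v = (‖v‖ : ℂ) • u := by
      rw [hudef, smul_smul]
      rw [mul_inv_cancel₀ (Complex.ofReal_ne_zero.mpr hnv)]
      simp
    have hku := key u hu
    have hDv : (fderiv ℂ F z - fderiv ℂ F z₀) v
        = (‖v‖ : ℂ) • ((fderiv ℂ F z - fderiv ℂ F z₀) u) := by
      conv_lhs => rw [hvu]
      rw [map_smul]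
    rw [hDv, norm_smul]
    have habs : ‖(‖v‖ : ℂ)‖ = ‖v‖ := by
      simp [Complex.norm_real]
    rw [habs, mul_comm ε ‖v‖]
    exact mul_le_mul_of_nonneg_left hku (norm_nonneg v)

/-- Let `Ω ⊆ ℂⁿ` be a domain and `F : Ω → ℂⁿ` a holomorphic map with an isolated
zero at `z₀`.  For each `k`, let `φ k : 𝔻 → X_k = ⋂_{j ≠ k} F_j⁻¹(0)` be a univalent
map with `φ k 0 = z₀`.  Then `F` is a local diffeomorphism near `z₀` (its complex
Jacobian at `z₀` is invertible) iff `(F_k ∘ φ_k)'(0) ≠ 0` for every `k`. -/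
theorem local_diffeo_iff_deriv_ne_zero
    (n : ℕ) (Ω : Set (Fin n → ℂ)) (hΩo : IsOpen Ω) (hΩc : IsConnected Ω)
    (F : (Fin n → ℂ) → (Fin n → ℂ)) (hF : DifferentiableOn ℂ F Ω)
    (z₀ : Fin n → ℂ) (hz₀ : z₀ ∈ Ω) (hF0 : F z₀ = 0)
    (hiso : ∃ ε > 0, ∀ z ∈ Metric.ball z₀ ε ∩ Ω, F z = 0 → z = z₀)
    (φ : Fin n → ℂ → (Fin n → ℂ))
    (hφdiff : ∀ k, DifferentiableOn ℂ (φ k) (Metric.ball 0 1))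
    (hφinj : ∀ k, Set.InjOn (φ k) (Metric.ball 0 1))
    (hφmaps : ∀ k, Set.MapsTo (φ k) (Metric.ball (0 : ℂ) 1)
      {z ∈ Ω | ∀ j, j ≠ k → F z j = 0})
    (hφ0 : ∀ k, φ k 0 = z₀) :
    Function.Bijective (fderiv ℂ F z₀) ↔ ∀ k, deriv (fun w => F (φ k w) k) 0 ≠ 0 := by
  classical
  rcases Nat.eq_zero_or_pos n with hn | hn
  · subst hn
    haveI : Subsingleton (Fin 0 → ℂ) := ⟨fun a b => funext fun i => i.elim0⟩
    constructor
    · intro _ k; exact k.elim0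
    · intro _
      exact ⟨fun a b _ => Subsingleton.elim a b, fun a => ⟨a, Subsingleton.elim _ _⟩⟩
  have hFz₀d : DifferentiableAt ℂ F z₀ := hF.differentiableAt (hΩo.mem_nhds hz₀)
  set A := fderiv ℂ F z₀ with hAdef
  have hφdAt : ∀ k, DifferentiableAt ℂ (φ k) 0 :=
    fun k => (hφdiff k).differentiableAt (Metric.ball_mem_nhds _ one_pos)
  have hchain : ∀ k j, HasDerivAt (fun w => F (φ k w) j) (A (deriv (φ k) 0) j) 0 := by
    intro k j
    have h1 : HasDerivAt (φ k) (deriv (φ k) 0) 0 := (hφdAt k).hasDerivAt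
    have h2 : HasFDerivAt F A (φ k 0) := by rw [hφ0 k]; exact hFz₀d.hasFDerivAt
    have h3 : HasDerivAt (fun w => F (φ k w)) (A (deriv (φ k) 0)) 0 :=
      h2.comp_hasDerivAt 0 h1
    have h4 := (ContinuousLinearMap.proj (R := ℂ) (φ := fun _ : Fin n => ℂ)
      j).hasFDerivAt.comp_hasDerivAt 0 h3
    exact h4
  have hoffdiag : ∀ k j, j ≠ k → A (deriv (φ k) 0) j = 0 := by
    intro k j hj
    have hzero : (fun w => F (φ k w) j) =ᶠ[𝓝 (0:ℂ)] (fun _ => 0) := by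
      filter_upwards [Metric.ball_mem_nhds (0:ℂ) one_pos] with z hz
      exact (hφmaps k hz).2 j hj
    have h5 := (hchain k j).deriv
    rw [Filter.EventuallyEq.deriv_eq hzero] at h5
    simp only [deriv_const] at h5
    exact h5.symm
  have hdiag : ∀ k, deriv (fun w => F (φ k w) k) 0 = A (deriv (φ k) 0) k :=
    fun k => (hchain k k).deriv
  constructor
  · -- forward direction
    intro hbij k
    set ψ : ℂ → ℂ := fun w => F (φ k w) k with hψdef
    have hψd : DifferentiableOn ℂ ψ (Metric.ball 0 1) := by
      intro z hz
      have h1 : DifferentiableWithinAt ℂ (fun w => F (φ k w)) (Metric.ball 0 1) z :=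
        (hF.differentiableAt (hΩo.mem_nhds (hφmaps k hz).1)).comp_differentiableWithinAt z
          ((hφdiff k) z hz)
      exact ((ContinuousLinearMap.proj (R := ℂ) (φ := fun _ : Fin n => ℂ)
        k).differentiable.differentiableAt).comp_differentiableWithinAt z h1
    have hψa : AnalyticAt ℂ ψ 0 := hψd.analyticAt (Metric.ball_mem_nhds _ one_pos)
    haveI : Nonempty (Fin n) := ⟨⟨0, hn⟩⟩
    have hbij' : Function.Bijective (A : (Fin n → ℂ) →ₗ[ℂ] (Fin n → ℂ)) := hbij
    set Aeq := LinearEquiv.ofBijective (A : (Fin n → ℂ) →ₗ[ℂ] (Fin n → ℂ)) hbij' with hAeq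
    set Ac := Aeq.toContinuousLinearEquiv with hAc
    set N : NNReal := ‖(Ac.symm : (Fin n → ℂ) →L[ℂ] (Fin n → ℂ))‖₊ with hNdef
    have hN0 : N ≠ 0 := by
      intro h
      have h0 : (Ac.symm : (Fin n → ℂ) →L[ℂ] (Fin n → ℂ)) = 0 := by
        rwa [← nnnorm_eq_zero]
      have h1 : Ac.symm (Pi.single (⟨0, hn⟩ : Fin n) (1:ℂ)) = Ac.symm 0 := by
        rw [map_zero]
        have : Ac.symm (Pi.single (⟨0, hn⟩ : Fin n) (1:ℂ))
            = (Ac.symm : (Fin n → ℂ) →L[ℂ] (Fin n → ℂ)) (Pi.single (⟨0, hn⟩ : Fin n) (1:ℂ)) := rfl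
        rw [this, h0]
        rfl
      have h2 := Ac.symm.injective h1
      have h3 := congrFun h2 ⟨0, hn⟩
      simp at h3
    set cc : NNReal := N⁻¹ / 2 with hccdef
    have hccne : cc ≠ 0 := div_ne_zero (inv_ne_zero hN0) two_ne_zero
    have hccpos : (0:ℝ) < cc := by
      have := pos_iff_ne_zero.mpr hccne
      exact_mod_cast this
    obtain ⟨δ, hδpos, hδΩ, hδbound⟩ := fderiv_close hΩo hF hz₀ hccpos
    have happrox : ApproximatesLinearOn F
        (Ac : (Fin n → ℂ) →L[ℂ] (Fin n → ℂ)) (Metric.ball z₀ δ) cc := by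
      intro x hx y hy
      have hmvt := Convex.norm_image_sub_le_of_norm_hasFDerivWithin_le'
        (f := F) (f' := fun w => fderiv ℂ F w) (φ := A) (C := (cc:ℝ)) (s := Metric.ball z₀ δ)
        (fun w hw => ((hF.differentiableAt (hΩo.mem_nhds (hδΩ hw))).hasFDerivAt).hasFDerivWithinAt)
        (fun w hw => hδbound w hw) (convex_ball z₀ δ) hy hx
      exact hmvt
    have hFinj : Set.InjOn F (Metric.ball z₀ δ) := by
      apply happrox.injOn
      right
      rw [hccdef]
      exact NNReal.half_lt_self (inv_ne_zero hN0)
    have hcont : ContinuousAt (φ k) 0 := (hφdAt k).continuousAt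
    have hev : ∀ᶠ z in 𝓝 (0:ℂ), φ k z ∈ Metric.ball z₀ δ := by
      have hb : Metric.ball z₀ δ ∈ 𝓝 (φ k 0) := by
        rw [hφ0 k]; exact Metric.ball_mem_nhds _ hδpos
      exact hcont hb
    obtain ⟨δ', hδ'pos, hδ'⟩ := Metric.eventually_nhds_iff_ball.mp hev
    have hδ''pos : 0 < min δ' 1 := lt_min hδ'pos one_pos
    have hψinj : Set.InjOn ψ (Metric.ball 0 (min δ' 1)) := by
      intro z₁ h₁ z₂ h₂ he
      have h₁' : z₁ ∈ Metric.ball (0:ℂ) 1 := Metric.ball_subset_ball (min_le_right _ _) h₁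
      have h₂' : z₂ ∈ Metric.ball (0:ℂ) 1 := Metric.ball_subset_ball (min_le_right _ _) h₂
      have hFeq : F (φ k z₁) = F (φ k z₂) := by
        funext j
        by_cases hj : j = k
        · subst hj; exact he
        · rw [(hφmaps k h₁').2 j hj, (hφmaps k h₂').2 j hj]
      have hφeq : φ k z₁ = φ k z₂ :=
        hFinj (hδ' z₁ (Metric.ball_subset_ball (min_le_left _ _) h₁))
          (hδ' z₂ (Metric.ball_subset_ball (min_le_left _ _) h₂)) hFeq
      exact hφinj k h₁' h₂' hφeq
    exact injOn_deriv_ne_zero hδ''pos hψa hψinj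
  · -- backward direction
    intro hk
    have hrange : ∀ k, Pi.single k (1:ℂ) ∈
        LinearMap.range (A : (Fin n → ℂ) →ₗ[ℂ] (Fin n → ℂ)) := by
      intro k
      have hck0 : A (deriv (φ k) 0) k ≠ 0 := by rw [← hdiag k]; exact hk k
      refine ⟨(A (deriv (φ k) 0) k)⁻¹ • deriv (φ k) 0, ?_⟩
      show A ((A (deriv (φ k) 0) k)⁻¹ • deriv (φ k) 0) = (Pi.single k 1 : Fin n → ℂ)
      rw [map_smul]
      funext j
      by_cases hj : j = k
      · subst hj; simp [inv_mul_cancel₀ hck0]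
      · simp [Pi.single_eq_of_ne hj, hoffdiag k j hj]
    have hsurj : Function.Surjective A := by
      have htop : LinearMap.range (A : (Fin n → ℂ) →ₗ[ℂ] (Fin n → ℂ)) = ⊤ := by
        rw [← top_le_iff, ← (Pi.basisFun ℂ (Fin n)).span_eq, Submodule.span_le]
        rintro _ ⟨i, rfl⟩
        rw [Pi.basisFun_apply]
        exact hrange i
      exact LinearMap.range_eq_top.mp htop
    have hinj : Function.Injective A := by
      have := (LinearMap.injective_iff_surjective
        (f := (A : (Fin n → ℂ) →ₗ[ℂ] (Fin n → ℂ)))).mpr hsurj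
      exact this
    exact ⟨hinj, hsurj⟩
end

section
/- Let {φₙ} be a sequence of uniformly bounded univalent functions on the unit disk 𝔻 converging uniformly on compact subsets of 𝔻 to a nonconstant function φ. Then d(∂φ(𝔻), ∂φₙ(𝔻)) → 0 as n → ∞, where for nonempty compact sets X, Y ⊂ ℂ, d(X, Y) = max_{x∈X} min_{y∈Y} |x − y| (i.e. every boundary point of φ(𝔻) is approximated by boundary points of φₙ(𝔻)). -/
open Complex Metric Set Filter Function Topology

/-- A preconnected set that misses the frontier of `t` and meets `t` is contained in `t`. -/
lemma aux_subset_of_inter_frontier_eq_empty {s t : Set ℂ} (hs : IsPreconnected s)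
    (h : s ∩ frontier t = ∅) (hne : (s ∩ t).Nonempty) : s ⊆ t := by
  have hfr : ∀ x ∈ s, x ∉ frontier t := fun x hx hx' =>
    (Set.eq_empty_iff_forall_notMem.mp h x) ⟨hx, hx'⟩
  have hsub : s ⊆ interior t ∪ (closure t)ᶜ := by
    intro x hx
    by_cases hxt : x ∈ closure t
    · left
      by_contra hxi
      exact hfr x hx ⟨hxt, hxi⟩
    · right; exact hxt
  have hmem : (s ∩ interior t).Nonempty := by
    obtain ⟨x, hxs, hxt⟩ := hne
    rcases hsub hxs with h1 | h1
    · exact ⟨x, hxs, h1⟩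
    · exact absurd (subset_closure hxt) h1
  have hempty : ¬ (s ∩ (closure t)ᶜ).Nonempty := by
    intro hne2
    obtain ⟨y, hy1, hy2⟩ := hs (interior t) ((closure t)ᶜ) isOpen_interior
      isClosed_closure.isOpen_compl hsub hmem hne2
    exact hy2.2 (subset_closure (interior_subset hy2.1))
  intro x hx
  rcases hsub hx with h1 | h1
  · exact interior_subset h1
  · exact absurd ⟨x, hx, h1⟩ hempty

/-- An injective holomorphic function on an open set has nonvanishing derivative. -/
lemma aux_deriv_ne_zero_of_injOn {f : ℂ → ℂ} {U : Set ℂ} (hU : IsOpen U)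
    (hf : DifferentiableOn ℂ f U) (hinj : Set.InjOn f U) {z₀ : ℂ} (hz₀ : z₀ ∈ U) :
    deriv f z₀ ≠ 0 := by
  intro hder
  have hfa : AnalyticAt ℂ f z₀ := hf.analyticAt (hU.mem_nhds hz₀)
  set F : ℂ → ℂ := fun z => f z - f z₀ with hFdef
  have hFa : AnalyticAt ℂ F z₀ := hfa.sub analyticAt_const
  have hnot : ¬ ∀ᶠ z in nhds z₀, F z = 0 := by
    intro h
    obtain ⟨δ, hδ, hball⟩ := Metric.eventually_nhds_iff_ball.mp (h.and (hU.eventually_mem hz₀))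
    have h1 : z₀ + (δ/2 : ℝ) ∈ ball z₀ δ := by
      simp only [mem_ball, dist_self_add_left, Complex.norm_real, Real.norm_eq_abs]
      rw [abs_of_pos (show (0:ℝ) < δ/2 by linarith)]
      linarith
    obtain ⟨hF0, hU0⟩ := hball _ h1
    have hfe : f (z₀ + (δ/2 : ℝ)) = f z₀ := by
      have := hF0; simpa [hFdef, sub_eq_zero] using this
    have := hinj hU0 hz₀ hfe
    have h2 : ((δ/2 : ℝ) : ℂ) = 0 := by
      have := add_eq_left.mp this
      exact this
    rw [Complex.ofReal_eq_zero] at h2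
    linarith
  have horder : analyticOrderAt F z₀ ≠ ⊤ := fun h => hnot (analyticOrderAt_eq_top.mp h)
  obtain ⟨n, hn⟩ := ENat.ne_top_iff_exists.mp horder
  obtain ⟨g, hg_an, hg0, hfg⟩ := (hFa.analyticOrderAt_eq_natCast (n := n)).mp hn.symm
  have hF0 : F z₀ = 0 := by simp [hFdef]
  have hn0 : n ≠ 0 := by
    rintro rfl
    have h := hfg.self_of_nhds
    rw [hF0] at h
    simp at h
    exact hg0 h.symm
  have hn1 : n ≠ 1 := by
    rintro rfl
    have hgd : DifferentiableAt ℂ g z₀ := hg_an.differentiableAt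
    have h1 : HasDerivAt (fun z => (z - z₀) ^ 1 • g z) (g z₀) z₀ := by
      have h2 := ((hasDerivAt_id z₀).sub_const z₀).mul hgd.hasDerivAt
      simpa [Pi.mul_def] using h2
    have h2 : HasDerivAt F (g z₀) z₀ := h1.congr_of_eventuallyEq hfg
    have h3 : deriv F z₀ = g z₀ := h2.deriv
    have h4 : deriv F z₀ = 0 := by
      have h5 : deriv F z₀ = deriv f z₀ := by
        simp [hFdef, deriv_sub_const]
      rw [h5, hder]
    exact hg0 (h3 ▸ h4 ▸ rfl)
  have hn2 : 2 ≤ n := by omega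
  obtain ⟨d, hd⟩ := IsAlgClosed.exists_pow_nat_eq (g z₀) (n := n) (by omega)
  have hdne : d ≠ 0 := by
    rintro rfl
    rw [zero_pow hn0] at hd
    exact hg0 hd.symm
  have hgz₀pos : 0 < ‖g z₀‖ := norm_pos_iff.mpr hg0
  have hev1 : ∀ᶠ z in nhds z₀, ‖g z - g z₀‖ < ‖g z₀‖ / 2 := by
    have hcont : ContinuousAt g z₀ := hg_an.continuousAt
    have h2 : g ⁻¹' (ball (g z₀) (‖g z₀‖ / 2)) ∈ nhds z₀ :=
      hcont.preimage_mem_nhds (Metric.ball_mem_nhds (g z₀) (show (0:ℝ) < ‖g z₀‖/2 by positivity))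
    filter_upwards [h2] with z hz
    rw [← dist_eq_norm]
    exact Metric.mem_ball.mp (Set.mem_preimage.mp hz)
  have hevAll := hfg.and (hev1.and (hg_an.eventually_analyticAt.and (hU.eventually_mem hz₀)))
  obtain ⟨δ, hδpos, hδ⟩ := Metric.eventually_nhds_iff_ball.mp hevAll
  set s := ball z₀ δ with hsdef
  have hsfacts : ∀ z ∈ s, g z ≠ 0 ∧ 0 < (g z / g z₀).re := by
    intro z hz
    obtain ⟨_, hb, _, _⟩ := hδ z hz
    have hgzne : g z ≠ 0 := by
      intro h
      rw [h, zero_sub, norm_neg] at hb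
      linarith
    refine ⟨hgzne, ?_⟩
    have h1 : ‖g z / g z₀ - 1‖ < 1/2 := by
      rw [div_sub_one hg0, norm_div]
      rw [div_lt_iff₀ hgz₀pos]
      linarith
    have h3 : |(g z / g z₀).re - 1| ≤ ‖g z / g z₀ - 1‖ := by
      simpa [Complex.sub_re, Complex.one_re] using
        Complex.abs_re_le_norm (g z / g z₀ - 1)
    have := abs_lt.mp (lt_of_le_of_lt h3 h1)
    linarith [this.1]
  set h : ℂ → ℂ := fun z => d * Complex.exp (Complex.log (g z / g z₀) / n) with hhdef
  set ψ : ℂ → ℂ := fun z => (z - z₀) * h z with hψdef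
  have hndC : (n : ℂ) ≠ 0 := Nat.cast_ne_zero.mpr hn0
  have hhpow : ∀ z ∈ s, h z ^ n = g z := by
    intro z hz
    obtain ⟨hgzne, _⟩ := hsfacts z hz
    have hGne : g z / g z₀ ≠ 0 := div_ne_zero hgzne hg0
    have e1 : (n : ℂ) * (Complex.log (g z / g z₀) / n) = Complex.log (g z / g z₀) := by
      field_simp
    calc (d * Complex.exp (Complex.log (g z / g z₀) / n)) ^ n
        = d ^ n * Complex.exp (Complex.log (g z / g z₀) / n) ^ n := mul_pow _ _ _
      _ = g z₀ * Complex.exp ((n : ℂ) * (Complex.log (g z / g z₀) / n)) := by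
          rw [hd, Complex.exp_nat_mul]
      _ = g z₀ * (g z / g z₀) := by rw [e1, Complex.exp_log hGne]
      _ = g z := by field_simp
  have hFψ : ∀ z ∈ s, F z = ψ z ^ n := by
    intro z hz
    obtain ⟨h1, _, _, _⟩ := hδ z hz
    rw [h1, hψdef]
    simp only [smul_eq_mul, mul_pow]
    rw [hhpow z hz]
  have hhdiffAt : ∀ z ∈ s, DifferentiableAt ℂ h z := by
    intro z hz
    obtain ⟨_, _, hga, _⟩ := hδ z hz
    obtain ⟨hgzne, hre⟩ := hsfacts z hz
    have hgd : DifferentiableAt ℂ g z := hga.differentiableAt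
    have hGd : DifferentiableAt ℂ (fun w => g w / g z₀) z := hgd.div_const _
    have hslit : g z / g z₀ ∈ Complex.slitPlane := Complex.mem_slitPlane_iff.mpr (Or.inl hre)
    exact (((hGd.clog hslit).div_const (n : ℂ)).cexp).const_mul d
  have hψdiff : DifferentiableOn ℂ ψ s := by
    intro z hz
    exact (((differentiableAt_id.sub_const z₀).mul (hhdiffAt z hz)).differentiableWithinAt)
  have hz₀s : z₀ ∈ s := mem_ball_self hδpos
  have hhz₀ : h z₀ = d := by
    simp [hhdef, div_self hg0, Complex.log_one]
  have hψd : HasDerivAt ψ d z₀ := by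
    have h2 := ((hasDerivAt_id z₀).sub_const z₀).mul (hhdiffAt z₀ hz₀s).hasDerivAt
    simpa [hhz₀, Pi.mul_def, hψdef] using h2
  have hψan : AnalyticAt ℂ ψ z₀ := hψdiff.analyticAt (isOpen_ball.mem_nhds hz₀s)
  have hstrict : HasStrictDerivAt ψ d z₀ := by
    have h1 : ContDiffAt ℂ 1 ψ z₀ := hψan.contDiffAt
    have h2 := h1.hasStrictDerivAt one_ne_zero
    rwa [hψd.deriv] at h2
  have hψz₀ : ψ z₀ = 0 := by simp [hψdef]
  have himg : ψ '' s ∈ nhds (0 : ℂ) := by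
    rw [← hψz₀, ← hstrict.map_nhds_eq hdne]
    exact image_mem_map (isOpen_ball.mem_nhds hz₀s)
  obtain ⟨ρ, hρpos, hρ⟩ := Metric.mem_nhds_iff.mp himg
  set t : ℂ := ((ρ/2 : ℝ) : ℂ) with htdef
  have ht0 : t ≠ 0 := by
    rw [htdef, Complex.ofReal_ne_zero]
    linarith
  set ω : ℂ := Complex.exp (((2 * Real.pi / n : ℝ) : ℂ) * Complex.I) with hωdef
  have hωnorm : ‖ω‖ = 1 := Complex.norm_exp_ofReal_mul_I _
  have htnorm : ‖t‖ = ρ/2 := by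
    rw [htdef, Complex.norm_real, Real.norm_eq_abs, abs_of_pos (show (0:ℝ) < ρ/2 by linarith)]
  have htmem : t ∈ ball (0 : ℂ) ρ := by
    rw [mem_ball_zero_iff, htnorm]; linarith
  have hωt : ‖ω * t‖ = ρ/2 := by
    rw [norm_mul, hωnorm, one_mul, htnorm]
  have hωtmem : ω * t ∈ ball (0 : ℂ) ρ := by
    rw [mem_ball_zero_iff, hωt]; linarith
  obtain ⟨z₁, hz₁s, hz₁⟩ := hρ htmem
  obtain ⟨z₂, hz₂s, hz₂⟩ := hρ hωtmem
  have hωn : ω ^ n = 1 := by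
    rw [hωdef, ← Complex.exp_nat_mul]
    have e1 : (n : ℂ) * (((2 * Real.pi / n : ℝ) : ℂ) * Complex.I) = 2 * Real.pi * Complex.I := by
      push_cast
      field_simp
    rw [e1, Complex.exp_two_pi_mul_I]
  have hω1 : ω ≠ 1 := by
    intro h
    obtain ⟨k, hk⟩ := Complex.exp_eq_one_iff.mp (hωdef ▸ h)
    have h1 : (((2 * Real.pi / n : ℝ) : ℂ) * Complex.I).im = 2 * Real.pi / n := by simp
    have h2 : ((k : ℂ) * (2 * Real.pi * Complex.I)).im = k * (2 * Real.pi) := by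
      simp [Complex.mul_im]
    have him2 : 2 * Real.pi / n = k * (2 * Real.pi) := by rw [← h1, ← h2, hk]
    have hπ := Real.pi_pos
    have hnR : (2 : ℝ) ≤ n := by exact_mod_cast hn2
    have hnpos : (0 : ℝ) < n := by linarith
    have him3 : 2 * Real.pi = (k : ℝ) * (2 * Real.pi) * n := by
      rw [div_eq_iff (ne_of_gt hnpos)] at him2
      linarith
    have hkpos : (0 : ℝ) < (k : ℝ) := by nlinarith [mul_pos hπ hnpos]
    have hk1 : (1 : ℝ) ≤ (k : ℝ) := by
      exact_mod_cast (show (0 : ℤ) < k by exact_mod_cast hkpos)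
    have hkn : (2:ℝ) ≤ (k:ℝ) * n := by
      have h3 := mul_le_mul_of_nonneg_right hk1 (by linarith : (0:ℝ) ≤ (n:ℝ))
      rw [one_mul] at h3
      linarith
    have h4 : 2 * Real.pi * 2 ≤ 2 * Real.pi * ((k:ℝ) * n) :=
      mul_le_mul_of_nonneg_left hkn (by linarith)
    nlinarith [him3, h4, hπ]
  have hFz₁ : F z₁ = t ^ n := by rw [hFψ z₁ hz₁s, hz₁]
  have hFz₂ : F z₂ = t ^ n := by
    rw [hFψ z₂ hz₂s, hz₂, mul_pow, hωn, one_mul]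
  have hfeq : f z₁ = f z₂ := by
    have : F z₁ = F z₂ := by rw [hFz₁, hFz₂]
    simpa [hFdef, sub_left_inj] using this
  have hz₁U : z₁ ∈ U := (hδ z₁ hz₁s).2.2.2
  have hz₂U : z₂ ∈ U := (hδ z₂ hz₂s).2.2.2
  have heq : z₁ = z₂ := hinj hz₁U hz₂U hfeq
  rw [heq, hz₂] at hz₁
  have : ω = 1 := by
    have h1 : ω * t = 1 * t := by rw [hz₁, one_mul]
    exact mul_right_cancel₀ ht0 h1
  exact hω1 this

/-- The local inverse of an injective holomorphic function is differentiable on the image. -/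
lemma aux_invFunOn_differentiableAt {f : ℂ → ℂ} {U : Set ℂ} (hU : IsOpen U)
    (hf : DifferentiableOn ℂ f U) (hinj : Set.InjOn f U) {w : ℂ} (hw : w ∈ f '' U) :
    DifferentiableAt ℂ (Function.invFunOn f U) w := by
  obtain ⟨z, hz, rfl⟩ := hw
  have hstrict : HasStrictDerivAt f (deriv f z) z := by
    have h1 : ContDiffAt ℂ 1 f z := (hf.analyticAt (hU.mem_nhds hz)).contDiffAt
    exact h1.hasStrictDerivAt one_ne_zero
  have hder := aux_deriv_ne_zero_of_injOn hU hf hinj hz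
  have hev : ∀ᶠ x in nhds z, Function.invFunOn f U (f x) = x :=
    (hU.eventually_mem hz).mono fun x hx => hinj.leftInvOn_invFunOn hx
  exact (HasStrictDerivAt.hasDerivAt (hstrict.to_local_left_inverse hder hev)).differentiableAt

lemma aux_moebius_identity (z a : ℂ) :
    ‖1 - (starRingEnd ℂ) z * a‖ ^ 2 - ‖a - z‖ ^ 2 = (1 - ‖z‖ ^ 2) * (1 - ‖a‖ ^ 2) := by
  rw [Complex.sq_norm, Complex.sq_norm, Complex.sq_norm, Complex.sq_norm]
  simp only [Complex.normSq_apply, Complex.sub_re, Complex.sub_im, Complex.mul_re,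
    Complex.mul_im, Complex.one_re, Complex.one_im, Complex.conj_re, Complex.conj_im]
  ring

lemma aux_moebius_denom_ne_zero {z a : ℂ} (hz : ‖z‖ < 1) (ha : ‖a‖ < 1) :
    1 - (starRingEnd ℂ) z * a ≠ 0 := by
  intro h
  have h1 : ‖(starRingEnd ℂ) z * a‖ < 1 := by
    rw [norm_mul, RCLike.norm_conj]
    nlinarith [norm_nonneg z, norm_nonneg a]
  have h2 : (1 : ℂ) = (starRingEnd ℂ) z * a := by
    have := sub_eq_zero.mp h
    exact this
  rw [← h2] at h1
  simp at h1

lemma aux_moebius_norm_lt_one {z a : ℂ} (hz : ‖z‖ < 1) (ha : ‖a‖ < 1) :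
    ‖(a - z) / (1 - (starRingEnd ℂ) z * a)‖ < 1 := by
  have hd := aux_moebius_denom_ne_zero hz ha
  rw [norm_div, div_lt_one (norm_pos_iff.mpr hd)]
  have hid := aux_moebius_identity z a
  have h1 : 0 < 1 - ‖z‖ ^ 2 := by nlinarith [norm_nonneg z]
  have h2 : 0 < 1 - ‖a‖ ^ 2 := by nlinarith [norm_nonneg a]
  have h3 : ‖a - z‖ ^ 2 < ‖1 - (starRingEnd ℂ) z * a‖ ^ 2 := by nlinarith
  nlinarith [norm_nonneg (a - z), norm_nonneg (1 - (starRingEnd ℂ) z * a)]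

lemma aux_moebius_small {z a : ℂ} (hz : ‖z‖ < 1) (ha : ‖a‖ < 1)
    (h : ‖(a - z) / (1 - (starRingEnd ℂ) z * a)‖ ≤ 1/2) :
    3/8 * (1 - ‖z‖) ≤ 1 - ‖a‖ ^ 2 := by
  have hd := aux_moebius_denom_ne_zero hz ha
  have hdp : 0 < ‖1 - (starRingEnd ℂ) z * a‖ := norm_pos_iff.mpr hd
  rw [norm_div, div_le_iff₀ hdp] at h
  have hid := aux_moebius_identity z a
  have hlow : 1 - ‖z‖ ≤ ‖1 - (starRingEnd ℂ) z * a‖ := by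
    have h1 : ‖(starRingEnd ℂ) z * a‖ ≤ ‖z‖ := by
      rw [norm_mul, RCLike.norm_conj]
      nlinarith [norm_nonneg z, norm_nonneg a]
    have h2 := norm_sub_norm_le (1 : ℂ) ((starRingEnd ℂ) z * a)
    rw [norm_one] at h2
    linarith
  have hz0 : (0:ℝ) ≤ 1 - ‖z‖ := by linarith
  have h3 : 3/4 * ‖1 - (starRingEnd ℂ) z * a‖ ^ 2 ≤ (1 - ‖z‖ ^ 2) * (1 - ‖a‖ ^ 2) := by
    nlinarith [norm_nonneg (a - z)]
  have h4 : 3/4 * (1 - ‖z‖) ^ 2 ≤ (1 - ‖z‖ ^ 2) * (1 - ‖a‖ ^ 2) := by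
    nlinarith
  have h5 : 1 - ‖z‖ ^ 2 ≤ 2 * (1 - ‖z‖) := by nlinarith [norm_nonneg z]
  have h6 : 0 ≤ 1 - ‖z‖ ^ 2 := by nlinarith [norm_nonneg z]
  have h7 : 0 ≤ 1 - ‖a‖ ^ 2 := by nlinarith [norm_nonneg a]
  nlinarith [h4, h5, h7, hz0, mul_nonneg hz0 hz0]

/-- Let `φₙ` be uniformly bounded univalent functions on the unit disk converging
uniformly on compact subsets of `𝔻` to a nonconstant `φ`.  Then
`d(∂φ(𝔻), ∂φₙ(𝔻)) → 0`: for every `ε > 0`, eventually every boundary point of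
`φ(𝔻)` is within `ε` of the boundary of `φₙ(𝔻)`. -/
theorem boundary_one_sided_hausdorff_tendsto_zero
    (φ : ℂ → ℂ) (φn : ℕ → ℂ → ℂ) (M : ℝ)
    (hbound : ∀ n, ∀ z ∈ Metric.ball (0 : ℂ) 1, ‖φn n z‖ ≤ M)
    (huniv : ∀ n, Set.InjOn (φn n) (Metric.ball (0 : ℂ) 1) ∧
      DifferentiableOn ℂ (φn n) (Metric.ball (0 : ℂ) 1))
    (hconv : ∀ K ⊆ Metric.ball (0 : ℂ) 1, IsCompact K →
      TendstoUniformlyOn (fun n => φn n) φ Filter.atTop K)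
    (hnc : ¬ ∃ c : ℂ, Set.EqOn φ (Function.const ℂ c) (Metric.ball (0 : ℂ) 1)) :
    ∀ ε > 0, ∃ N : ℕ, ∀ n ≥ N, ∀ x ∈ frontier (φ '' Metric.ball (0 : ℂ) 1),
      Metric.infDist x (frontier (φn n '' Metric.ball (0 : ℂ) 1)) < ε := by
  set D := Metric.ball (0 : ℂ) 1 with hDdef
  -- φ is holomorphic on D
  have hloc : TendstoLocallyUniformlyOn (fun n => φn n) φ atTop D := by
    rw [tendstoLocallyUniformlyOn_iff_forall_isCompact Metric.isOpen_ball]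
    exact fun K hK hKc => hconv K hK hKc
  have hφdiff : DifferentiableOn ℂ φ D :=
    hloc.differentiableOn (Filter.Eventually.of_forall fun n => (huniv n).2) Metric.isOpen_ball
  -- φ is bounded by M
  have hpt : ∀ z ∈ D, Tendsto (fun n => φn n z) atTop (nhds (φ z)) := by
    intro z hz
    exact (hconv {z} (Set.singleton_subset_iff.mpr hz) isCompact_singleton).tendsto_at rfl
  have hφM : ∀ z ∈ D, ‖φ z‖ ≤ M := by
    intro z hz
    refine le_of_tendsto ((hpt z hz).norm) (Filter.Eventually.of_forall fun n => ?_)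
    simpa using hbound n z hz
  -- the image of φ is open
  have hΩopen : IsOpen (φ '' D) := by
    rcases (hφdiff.analyticOnNhd Metric.isOpen_ball).is_constant_or_isOpen
        (convex_ball (0:ℂ) 1).isPreconnected with h | h
    · exact absurd ⟨h.choose, fun z hz => h.choose_spec z hz⟩ hnc
    · exact h D subset_rfl Metric.isOpen_ball
  -- the frontier of the image is compact
  have hΩsub : φ '' D ⊆ closedBall (0 : ℂ) M := by
    rintro _ ⟨z, hz, rfl⟩
    rw [mem_closedBall_zero_iff]
    exact hφM z hz
  have hKcomp : IsCompact (frontier (φ '' D)) := by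
    refine (isCompact_closedBall (0:ℂ) M).of_isClosed_subset isClosed_frontier ?_
    exact (frontier_subset_closure).trans
      (closure_minimal hΩsub isClosed_closedBall)
  intro ε hε
  -- net construction: find r₀ < 1 such that every frontier point is ε/16-close to a point
  -- of φ '' (closedBall 0 r₀ ∩ D)
  set W : ℕ → Set ℂ := fun k => ⋃ z ∈ (closedBall (0:ℂ) (1 - 1/(k+1)) ∩ D), ball (φ z) (ε/16)
    with hWdef
  have hWopen : ∀ k : ℕ, IsOpen (W k) := fun k => isOpen_biUnion fun _ _ => isOpen_ball
  have hWcover : frontier (φ '' D) ⊆ ⋃ k, W k := by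
    intro x hx
    have hxcl : x ∈ closure (φ '' D) := frontier_subset_closure hx
    obtain ⟨y, hy, hxy⟩ := Metric.mem_closure_iff.mp hxcl (ε/16) (by positivity)
    obtain ⟨z, hzD, rfl⟩ := hy
    have hz1 : ‖z‖ < 1 := mem_ball_zero_iff.mp hzD
    obtain ⟨k, hk⟩ := exists_nat_one_div_lt (show 0 < 1 - ‖z‖ by linarith)
    refine Set.mem_iUnion.mpr ⟨k, ?_⟩
    rw [hWdef]
    refine Set.mem_biUnion ⟨?_, hzD⟩ ?_
    · rw [mem_closedBall_zero_iff]
      have : 1/((k:ℝ)+1) < 1 - ‖z‖ := by exact_mod_cast hk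
      linarith
    · rw [mem_ball]
      rw [dist_comm] at hxy
      rw [dist_comm]
      exact hxy
  obtain ⟨fs, hfs⟩ := hKcomp.elim_finite_subcover W hWopen hWcover
  set k₀ := fs.sup id with hk₀
  set r₀ : ℝ := 1 - 1/(k₀+1) with hr₀def
  have hr₀0 : 0 ≤ r₀ := by
    rw [hr₀def]
    have h1 : 1/((k₀:ℝ)+1) ≤ 1 := by
      rw [div_le_one (by positivity)]
      linarith [Nat.cast_nonneg (α := ℝ) k₀]
    linarith
  have hr₀1 : r₀ < 1 := by
    rw [hr₀def]
    have h1 : 0 < 1/((k₀:ℝ)+1) := by positivity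
    linarith
  have hnet : ∀ x ∈ frontier (φ '' D), ∃ z, ‖z‖ ≤ r₀ ∧ z ∈ D ∧ dist x (φ z) < ε/16 := by
    intro x hx
    obtain ⟨k, hkfs, hxW⟩ := Set.mem_iUnion₂.mp (hfs hx)
    rw [hWdef] at hxW
    obtain ⟨z, hz, hxz⟩ := Set.mem_iUnion₂.mp hxW
    refine ⟨z, ?_, hz.2, by simpa [mem_ball] using hxz⟩
    have h1 : ‖z‖ ≤ 1 - 1/(k+1) := mem_closedBall_zero_iff.mp hz.1
    have h2 : (k : ℝ) ≤ k₀ := by exact_mod_cast Finset.le_sup (f := id) hkfs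
    have h3 : 1/((k₀:ℝ)+1) ≤ 1/((k:ℝ)+1) := by
      apply one_div_le_one_div_of_le
      · positivity
      · linarith
    rw [hr₀def]
    linarith
  clear_value r₀
  -- the compact set K₂ and the margin m
  set c : ℝ := 3/8 * (1 - r₀) with hcdef
  have hcpos : 0 < c := by rw [hcdef]; linarith
  clear_value c
  set K₂ : Set ℂ := {w : ℂ | c ≤ 1 - ‖w‖ ^ 2} with hK₂def
  have hK₂D : K₂ ⊆ D := by
    intro w hw
    rw [hK₂def, Set.mem_setOf_eq] at hw
    rw [hDdef, mem_ball_zero_iff]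
    nlinarith [norm_nonneg w]
  have hK₂compact : IsCompact K₂ := by
    refine (isCompact_closedBall (0:ℂ) 1).of_isClosed_subset ?_ ?_
    · exact isClosed_le continuous_const (continuous_const.sub (continuous_norm.pow 2))
    · intro w hw
      rw [hK₂def, Set.mem_setOf_eq] at hw
      rw [mem_closedBall_zero_iff]
      nlinarith [norm_nonneg w]
  have hK₂img : IsCompact (φ '' K₂) :=
    hK₂compact.image_of_continuousOn (hφdiff.continuousOn.mono hK₂D)
  obtain ⟨m, hm, hthick⟩ := hK₂img.exists_thickening_subset_open hΩopen (Set.image_mono hK₂D)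
  -- choice of N
  obtain ⟨N, hN⟩ := Filter.eventually_atTop.mp
    (Metric.tendstoUniformlyOn_iff.mp (hconv K₂ hK₂D hK₂compact) (min (ε/16) m)
      (lt_min (by positivity) hm))
  refine ⟨N, fun n hn x hx => ?_⟩
  obtain ⟨z, hzr, hzD, hxz⟩ := hnet x hx
  have hznorm : ‖z‖ < 1 := mem_ball_zero_iff.mp hzD
  have hzK₂ : z ∈ K₂ := by
    rw [hK₂def, Set.mem_setOf_eq, hcdef]
    have h1 : ‖z‖ ^ 2 ≤ r₀ ^ 2 := by nlinarith [norm_nonneg z]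
    nlinarith
  have hq1 : dist (φn n z) (φ z) < min (ε/16) m := by
    rw [dist_comm]
    exact hN n hn z hzK₂
  have hqx : dist (φn n z) x < ε/8 := by
    have h1 := dist_triangle (φn n z) (φ z) x
    have h2 : dist (φn n z) (φ z) < ε/16 := lt_of_lt_of_le hq1 (min_le_left _ _)
    rw [dist_comm x (φ z)] at hxz
    linarith
  by_cases hfr : (ball x (ε/2) ∩ frontier (φn n '' D)).Nonempty
  · obtain ⟨p, hp1, hp2⟩ := hfr
    calc Metric.infDist x (frontier (φn n '' D)) ≤ dist x p := Metric.infDist_le_dist_of_mem hp2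
      _ < ε := by
        have := mem_ball.mp hp1
        rw [dist_comm]
        linarith
  · exfalso
    rw [Set.not_nonempty_iff_eq_empty] at hfr
    have hqmem : φn n z ∈ ball x (ε/2) := by
      rw [mem_ball]
      linarith
    have hBsub : ball x (ε/2) ⊆ φn n '' D :=
      aux_subset_of_inter_frontier_eq_empty (convex_ball x (ε/2)).isPreconnected hfr
        ⟨φn n z, hqmem, ⟨z, hzD, rfl⟩⟩
    obtain ⟨a, haD, hax⟩ := hBsub (mem_ball_self (by positivity))
    set g := Function.invFunOn (φn n) D with hgdef
    have hgD : ∀ w ∈ φn n '' D, g w ∈ D := by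
      rintro w ⟨b, hb, hbw⟩
      exact Function.invFunOn_mem ⟨b, hb, hbw⟩
    set σ : ℂ → ℂ := fun w => (g w - z) / (1 - (starRingEnd ℂ) z * g w) with hσdef
    have hB'sub : ball (φn n z) (ε/4) ⊆ φn n '' D := by
      intro w hw
      apply hBsub
      rw [mem_ball]
      have h1 := dist_triangle w (φn n z) x
      have h2 := mem_ball.mp hw
      linarith
    have hσdiff : DifferentiableOn ℂ σ (ball (φn n z) (ε/4)) := by
      intro w hw
      have hwD := hB'sub hw
      have h1 : DifferentiableAt ℂ g w :=
        aux_invFunOn_differentiableAt Metric.isOpen_ball (huniv n).2 (huniv n).1 hwD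
      have hden : 1 - (starRingEnd ℂ) z * g w ≠ 0 :=
        aux_moebius_denom_ne_zero hznorm (mem_ball_zero_iff.mp (hgD w hwD))
      exact ((h1.sub_const z).div
        ((differentiableAt_const _).sub ((differentiableAt_const _).mul h1)) hden)
        |>.differentiableWithinAt
    have hgq : g (φn n z) = z := (huniv n).1.leftInvOn_invFunOn hzD
    have hσq : σ (φn n z) = 0 := by
      rw [hσdef]
      simp [hgq]
    have hmaps : MapsTo σ (ball (φn n z) (ε/4)) (ball (σ (φn n z)) 1) := by
      intro w hw
      rw [hσq, mem_ball_zero_iff]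
      exact aux_moebius_norm_lt_one hznorm (mem_ball_zero_iff.mp (hgD w (hB'sub hw)))
    have hxball : x ∈ ball (φn n z) (ε/4) := by
      rw [mem_ball, dist_comm]
      linarith
    have hschwarz := Complex.dist_le_div_mul_dist_of_mapsTo_ball hσdiff (hmaps.mono_right ball_subset_closedBall) hxball
    have hgx : g x = a := by
      rw [← hax]
      exact (huniv n).1.leftInvOn_invFunOn haD
    have hσx : ‖σ x‖ ≤ 1/2 := by
      rw [hσq, dist_zero_right] at hschwarz
      calc ‖σ x‖ ≤ 1 / (ε/4) * dist x (φn n z) := hschwarz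
        _ ≤ 1 / (ε/4) * (ε/8) := by
            apply mul_le_mul_of_nonneg_left _ (by positivity)
            rw [dist_comm]
            linarith
        _ = 1/2 := by field_simp; ring
    have hanorm : ‖a‖ < 1 := mem_ball_zero_iff.mp haD
    have hkey : 3/8 * (1 - ‖z‖) ≤ 1 - ‖a‖ ^ 2 := by
      apply aux_moebius_small hznorm hanorm
      rw [hσdef] at hσx
      simpa [hgx] using hσx
    have haK₂ : a ∈ K₂ := by
      rw [hK₂def, Set.mem_setOf_eq, hcdef]
      linarith
    have hda : dist (φ a) (φn n a) < m := lt_of_lt_of_le (hN n hn a haK₂) (min_le_right _ _)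
    have hxΩ : x ∈ φ '' D := by
      apply hthick
      rw [Metric.mem_thickening_iff]
      refine ⟨φ a, Set.mem_image_of_mem _ haK₂, ?_⟩
      rw [← hax, dist_comm]
      exact hda
    rw [hΩopen.frontier_eq] at hx
    exact hx.2 hxΩ
end

section
/- Let f₁, f₂ be monic centered polynomials of degree d ≥ 2 whose Julia sets are connected and locally connected, and let λ_ℝ(f_k) ⊂ (ℝ/ℤ)² denote the landing relation of external angles of f_k. If λ_ℝ(f₁) ⊆ λ_ℝ(f₂), then the conformal map B_{f₂}⁻¹ ∘ B_{f₁} : U_{f₁,∞} → U_{f₂,∞} between the basins of infinity extends continuously to a map φ : closure(U_{f₁,∞}) → closure(U_{f₂,∞}) satisfying φ(f₁(z)) = f₂(φ(z)) for all z in closure(U_{f₁,∞}). -/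
open Filter Set Bornology Metric Polynomial Topology

noncomputable def Complex.abs : AbsoluteValue ℂ ℝ where
  toFun := fun z => ‖z‖
  map_mul' := norm_mul
  nonneg' := norm_nonneg
  eq_zero' := fun _ => norm_eq_zero
  add_le' := norm_add_le

theorem Complex.norm_eq_abs (z : ℂ) : ‖z‖ = Complex.abs z := rfl

theorem Complex.continuous_abs : Continuous Complex.abs := continuous_norm

theorem Complex.abs_ofReal (r : ℝ) : Complex.abs (r : ℂ) = |r| := by
  rw [← Complex.norm_eq_abs, Complex.norm_real, Real.norm_eq_abs]

theorem Complex.abs_mul_exp_arg_mul_I (x : ℂ) :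
    ((Complex.abs x : ℝ) : ℂ) * Complex.exp (x.arg * Complex.I) = x :=
  Complex.norm_mul_exp_arg_mul_I x

private lemma aux_escape (p : Polynomial ℂ) (hm : p.Monic) (hd2 : 2 ≤ p.natDegree) :
    ∃ R : ℝ, 1 ≤ R ∧ ∀ z : ℂ, R ≤ Complex.abs z → 2 * Complex.abs z ≤ Complex.abs (p.eval z) := by
  set d := p.natDegree with hd
  set C : ℝ := ∑ i ∈ Finset.range d, Complex.abs (p.coeff i) with hCdef
  have hC : 0 ≤ C := Finset.sum_nonneg fun i _ => Complex.abs.nonneg _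
  refine ⟨C + 2, by linarith, fun z hz => ?_⟩
  have hz1 : (1:ℝ) ≤ Complex.abs z := by linarith
  obtain ⟨e, he⟩ : ∃ e, d = e + 1 := ⟨d - 1, by omega⟩
  have he1 : 1 ≤ e := by omega
  have heval : p.eval z = (∑ i ∈ Finset.range d, p.coeff i * z ^ i) + z ^ d := by
    have h1 := Polynomial.eval_eq_sum_range' (lt_add_one d) z
    rw [Finset.sum_range_succ, hm.coeff_natDegree] at h1
    simpa using h1
  set s : ℂ := ∑ i ∈ Finset.range d, p.coeff i * z ^ i with hs
  have hsle : Complex.abs s ≤ C * Complex.abs z ^ e := by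
    have h1 : Complex.abs s ≤ ∑ i ∈ Finset.range d, Complex.abs (p.coeff i * z ^ i) :=
      Finset.le_sum_of_subadditive Complex.abs (map_zero _).le Complex.abs.add_le _ _
    refine h1.trans ?_
    rw [hCdef, Finset.sum_mul]
    refine Finset.sum_le_sum fun i hi => ?_
    rw [map_mul, map_pow]
    have hile : i ≤ e := by
      have := Finset.mem_range.mp hi; omega
    have h2 : Complex.abs z ^ i ≤ Complex.abs z ^ e := pow_le_pow_right₀ hz1 hile
    have h0 : 0 ≤ Complex.abs (p.coeff i) := Complex.abs.nonneg _
    nlinarith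
  have hzd : Complex.abs (z ^ d) = Complex.abs z ^ e * Complex.abs z := by
    rw [map_pow, he, pow_succ]
  have hlow : Complex.abs z ^ e * Complex.abs z - C * Complex.abs z ^ e ≤ Complex.abs (p.eval z) := by
    have h1 : Complex.abs (z ^ d) ≤ Complex.abs (p.eval z) + Complex.abs s := by
      calc Complex.abs (z ^ d) = Complex.abs (p.eval z + (-s)) := by rw [heval]; ring_nf
        _ ≤ Complex.abs (p.eval z) + Complex.abs (-s) := Complex.abs.add_le _ _
        _ = Complex.abs (p.eval z) + Complex.abs s := by rw [Complex.abs.map_neg]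
    rw [hzd] at h1; linarith
  have hpow : Complex.abs z ≤ Complex.abs z ^ e := by
    calc Complex.abs z = Complex.abs z ^ 1 := (pow_one _).symm
      _ ≤ Complex.abs z ^ e := pow_le_pow_right₀ hz1 he1
  nlinarith [hlow, hpow, sq_nonneg (Complex.abs z)]

private def Kset (p : Polynomial ℂ) : Set ℂ :=
  {z : ℂ | IsBounded (Set.range fun n => (fun w => p.eval w)^[n] z)}

private lemma aux_inv (p : Polynomial ℂ) {z : ℂ} : z ∈ (Kset p)ᶜ ↔ p.eval z ∈ (Kset p)ᶜ := by
  rw [not_iff_not.symm]; simp only [mem_compl_iff, not_not]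
  unfold Kset; simp only [mem_setOf_eq]
  constructor
  · intro h
    refine h.subset ?_
    rintro _ ⟨n, rfl⟩
    exact ⟨n + 1, by simp [Function.iterate_succ_apply]⟩
  · intro h
    have hsub : (Set.range fun n => (fun w => p.eval w)^[n] z) ⊆
        {z} ∪ Set.range fun n => (fun w => p.eval w)^[n] (p.eval z) := by
      rintro _ ⟨n, rfl⟩
      cases n with
      | zero => left; simp
      | succ m => right; exact ⟨m, by simp [Function.iterate_succ_apply]⟩
    exact ((isBounded_singleton (x := z)).union h).subset hsub

private lemma aux_closed (p : Polynomial ℂ) (hm : p.Monic) (hd2 : 2 ≤ p.natDegree) :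
    ∃ R : ℝ, 1 ≤ R ∧ IsClosed (Kset p) ∧ (∀ z : ℂ, R ≤ Complex.abs z → z ∈ (Kset p)ᶜ) := by
  obtain ⟨R, hR1, hR⟩ := aux_escape p hm hd2
  set f : ℂ → ℂ := fun w => p.eval w with hf
  have hesc : ∀ z : ℂ, R ≤ Complex.abs z → ∀ n : ℕ,
      R ≤ Complex.abs (f^[n] z) ∧ 2 ^ n * Complex.abs z ≤ Complex.abs (f^[n] z) := by
    intro z hz n
    induction n with
    | zero => simpa using hz
    | succ m ih =>
      obtain ⟨ih1, ih2⟩ := ih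
      rw [Function.iterate_succ_apply']
      have h2 := hR _ ih1
      constructor
      · calc R ≤ Complex.abs (f^[m] z) := ih1
          _ ≤ 2 * Complex.abs (f^[m] z) := by nlinarith [Complex.abs.nonneg (f^[m] z)]
          _ ≤ _ := h2
      · calc (2:ℝ) ^ (m+1) * Complex.abs z = 2 * (2 ^ m * Complex.abs z) := by ring
          _ ≤ 2 * Complex.abs (f^[m] z) := by linarith
          _ ≤ _ := h2
  have hesc' : ∀ z : ℂ, R ≤ Complex.abs z → z ∈ (Kset p)ᶜ := by
    intro z hz hbd
    simp only [Kset, mem_compl_iff, mem_setOf_eq, not_not] at hbd ⊢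
    obtain ⟨M, hM⟩ := isBounded_iff_forall_norm_le.mp hbd
    obtain ⟨n, hn⟩ := pow_unbounded_of_one_lt M (one_lt_two (α := ℝ))
    have h1 := (hesc z hz n).2
    have h2 := hM _ ⟨n, rfl⟩
    rw [Complex.norm_eq_abs] at h2
    have h3 : (1:ℝ) ≤ Complex.abs z := hR1.trans hz
    nlinarith [pow_pos (two_pos (α := ℝ)) n]
  refine ⟨R, hR1, ?_, hesc'⟩
  have hKeq : Kset p = ⋂ n : ℕ, (fun z => f^[n] z) ⁻¹' (Metric.closedBall 0 R) := by
    ext z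
    simp only [Kset, mem_setOf_eq, mem_iInter, mem_preimage, Metric.mem_closedBall,
      dist_zero_right, Complex.norm_eq_abs]
    constructor
    · intro hbd n
      by_contra hgt
      push_neg at hgt
      refine hesc' _ hgt.le ?_
      simp only [Kset, mem_compl_iff, mem_setOf_eq, not_not]
      refine hbd.subset ?_
      rintro _ ⟨m, rfl⟩
      exact ⟨m + n, Function.iterate_add_apply f m n z⟩
    · intro hall
      exact (isBounded_closedBall (x := (0:ℂ)) (r := R)).subset (by
        rintro _ ⟨n, rfl⟩
        simpa [Metric.mem_closedBall, dist_zero_right, Complex.norm_eq_abs] using hall n)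
  rw [hKeq]
  refine isClosed_iInter fun n => ?_
  exact IsClosed.preimage ((p.continuous).iterate n) Metric.isClosed_closedBall

-- the approximating sequence from outside
private lemma aux_useq (w : ℂ) :
    Tendsto (fun n : ℕ => ((1 + 1 / (n + 1) : ℝ)) • w) atTop (nhds w) := by
  have h1 : Tendsto (fun n : ℕ => (1 + 1 / (n + 1) : ℝ)) atTop (nhds 1) := by
    have := tendsto_one_div_add_atTop_nhds_zero_nat (𝕜 := ℝ)
    have h2 := this.const_add (1 : ℝ)
    simpa using h2
  simpa using h1.smul_const w

private lemma aux_useq_abs (w : ℂ) (hw : 1 ≤ Complex.abs w) (n : ℕ) :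
    1 < Complex.abs (((1 + 1 / (n + 1) : ℝ)) • w) := by
  have h1 : (0:ℝ) < 1 / (n + 1) := by positivity
  rw [Complex.real_smul, map_mul, Complex.abs_ofReal, abs_of_pos (by linarith)]
  nlinarith

-- quotient-map continuity transfer
private lemma aux_quot {A : Set ℂ} (hA : IsCompact A) {f g φ : ℂ → ℂ}
    (hf : ContinuousOn f A) (hg : ContinuousOn g A)
    (hfg : ∀ w ∈ A, φ (f w) = g w) : ContinuousOn φ (f '' A) := by
  haveI : CompactSpace A := isCompact_iff_compactSpace.mp hA
  set F : A → f '' A := fun a => ⟨f a, mem_image_of_mem f a.2⟩ with hF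
  have hFc : Continuous F := (continuousOn_iff_continuous_restrict.mp hf).subtype_mk _
  have hFs : Function.Surjective F := by
    rintro ⟨t, z, hz, rfl⟩
    exact ⟨⟨z, hz⟩, rfl⟩
  have hq : IsQuotientMap F := IsQuotientMap.of_surjective_continuous hFs hFc
  have hcomp : Continuous ((fun t : f '' A => φ t.val) ∘ F) := by
    have : ((fun t : f '' A => φ t.val) ∘ F) = (A.restrict g) := by
      funext a; exact hfg a a.2
    rw [this]
    exact continuousOn_iff_continuous_restrict.mp hg
  exact continuousOn_iff_continuous_restrict.mpr (hq.continuous_iff.mpr hcomp)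

-- every unimodular number is exp(2 π θ i)
private lemma aux_circle (w : ℂ) (hw : Complex.abs w = 1) :
    ∃ θ : ℝ, Complex.exp (2 * Real.pi * (θ : ℂ) * Complex.I) = w := by
  refine ⟨w.arg / (2 * Real.pi), ?_⟩
  have hpi := Real.pi_ne_zero
  have harg : (2 * (Real.pi : ℂ) * ((w.arg / (2 * Real.pi) : ℝ) : ℂ) * Complex.I)
      = (w.arg : ℂ) * Complex.I := by
    push_cast
    have : (Real.pi : ℂ) ≠ 0 := by exact_mod_cast hpi
    field_simp
  rw [harg]
  have := Complex.abs_mul_exp_arg_mul_I w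
  rw [hw] at this
  simpa using this

-- connectedness of the complement of a disk
private lemma aux_conn (c : ℝ) (hc : 0 < c) : IsPreconnected {w : ℂ | c < Complex.abs w} := by
  have himg : {w : ℂ | c < Complex.abs w} =
      (fun p : ℝ × ℂ => p.1 • p.2) '' (Set.Ioi c ×ˢ Metric.sphere (0:ℂ) 1) := by
    ext w
    simp only [mem_setOf_eq, mem_image, mem_prod, mem_Ioi, Metric.mem_sphere,
      dist_zero_right, Complex.norm_eq_abs, Prod.exists]
    constructor
    · intro hcw
      have hw0 : w ≠ 0 := by
        intro h; rw [h] at hcw; simp at hcw; linarith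
      have habs : Complex.abs w ≠ 0 := by simpa using hw0
      refine ⟨Complex.abs w, (Complex.abs w)⁻¹ • w, ⟨hcw, ?_⟩, ?_⟩
      · rw [Complex.real_smul, map_mul, Complex.abs_ofReal, abs_inv, abs_of_nonneg (Complex.abs.nonneg w)]
        field_simp
      · rw [smul_smul]
        field_simp
        exact one_smul _ _
    · rintro ⟨t, u, ⟨ht, hu⟩, rfl⟩
      rw [Complex.real_smul, map_mul, Complex.abs_ofReal, hu,
        abs_of_pos (lt_trans hc ht)]
      simpa using ht
  rw [himg]
  refine IsPreconnected.image ?_ _ (continuous_smul.continuousOn)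
  refine IsPreconnected.prod isPreconnected_Ioi ?_
  refine isPreconnected_sphere ?_ (0:ℂ) 1
  rw [Complex.rank_real_complex]
  norm_num


/-- Let `p₁, p₂` be monic centered polynomials of degree `d ≥ 2` with connected and
locally connected Julia sets, with filled Julia sets `K₁, K₂`, Böttcher coordinates
`B₁, B₂` (conformal bijections from the basins of infinity `K₁ᶜ, K₂ᶜ` onto
`{|z| > 1}`, tangent to the identity at `∞`, conjugating `pₖ` to `z ^ d`), and
continuous extensions `ψ₁, ψ₂` of `B₁⁻¹, B₂⁻¹` to `{|z| ≥ 1}`.  If the real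
lamination of `p₁` (the landing relation `ψ₁(e^{2πiθ₁}) = ψ₁(e^{2πiθ₂})`) is
contained in that of `p₂`, then `B₂⁻¹ ∘ B₁ : K₁ᶜ → K₂ᶜ` extends continuously to
`φ : closure K₁ᶜ → closure K₂ᶜ` and `φ ∘ p₁ = p₂ ∘ φ` on `closure K₁ᶜ`. -/
theorem boettcher_conjugacy_extends_continuously
    (d : ℕ) (hd : 2 ≤ d)
    (p₁ p₂ : Polynomial ℂ)
    (hdeg₁ : p₁.natDegree = d) (hdeg₂ : p₂.natDegree = d)
    (hmonic₁ : p₁.Monic) (hmonic₂ : p₂.Monic)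
    (hcent₁ : p₁.coeff (d - 1) = 0) (hcent₂ : p₂.coeff (d - 1) = 0)
    (K₁ K₂ : Set ℂ)
    (hK₁ : K₁ = {z : ℂ | Bornology.IsBounded (Set.range fun n => (fun w => p₁.eval w)^[n] z)})
    (hK₂ : K₂ = {z : ℂ | Bornology.IsBounded (Set.range fun n => (fun w => p₂.eval w)^[n] z)})
    (hJconn₁ : IsConnected (frontier K₁)) (hJconn₂ : IsConnected (frontier K₂))
    (hJlc₁ : LocallyConnectedSpace (frontier K₁)) (hJlc₂ : LocallyConnectedSpace (frontier K₂))
    (B₁ B₂ : ℂ → ℂ)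
    (hB₁ : Set.BijOn B₁ K₁ᶜ {z : ℂ | 1 < ‖z‖})
    (hB₂ : Set.BijOn B₂ K₂ᶜ {z : ℂ | 1 < ‖z‖})
    (hB₁d : DifferentiableOn ℂ B₁ K₁ᶜ) (hB₂d : DifferentiableOn ℂ B₂ K₂ᶜ)
    (hB₁conj : ∀ z ∈ K₁ᶜ, B₁ (p₁.eval z) = B₁ z ^ d)
    (hB₂conj : ∀ z ∈ K₂ᶜ, B₂ (p₂.eval z) = B₂ z ^ d)
    (hB₁tan : Filter.Tendsto (fun z => B₁ z / z) (Bornology.cobounded ℂ) (nhds 1))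
    (hB₂tan : Filter.Tendsto (fun z => B₂ z / z) (Bornology.cobounded ℂ) (nhds 1))
    (ψ₁ ψ₂ : ℂ → ℂ)
    (hψ₁c : ContinuousOn ψ₁ {z : ℂ | 1 ≤ ‖z‖})
    (hψ₂c : ContinuousOn ψ₂ {z : ℂ | 1 ≤ ‖z‖})
    (hψ₁ : ∀ z ∈ K₁ᶜ, ψ₁ (B₁ z) = z)
    (hψ₂ : ∀ z ∈ K₂ᶜ, ψ₂ (B₂ z) = z)
    (hlam : ∀ θ₁ θ₂ : ℝ,
      ψ₁ (Complex.exp (2 * Real.pi * (θ₁ : ℂ) * Complex.I)) =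
        ψ₁ (Complex.exp (2 * Real.pi * (θ₂ : ℂ) * Complex.I)) →
      ψ₂ (Complex.exp (2 * Real.pi * (θ₁ : ℂ) * Complex.I)) =
        ψ₂ (Complex.exp (2 * Real.pi * (θ₂ : ℂ) * Complex.I))) :
    ∃ φ : ℂ → ℂ, ContinuousOn φ (closure K₁ᶜ) ∧
      Set.MapsTo φ (closure K₁ᶜ) (closure K₂ᶜ) ∧
      (∀ z ∈ K₁ᶜ, φ z = ψ₂ (B₁ z)) ∧
      ∀ z ∈ closure K₁ᶜ, φ (p₁.eval z) = p₂.eval (φ z) := by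
  classical
  set D : Set ℂ := {w : ℂ | 1 ≤ Complex.abs w} with hD
  set E : Set ℂ := {w : ℂ | 1 < Complex.abs w} with hE
  have hED : E ⊆ D := by
    intro w hw
    simp only [hE, mem_setOf_eq] at hw
    simp only [hD, mem_setOf_eq]
    exact le_of_lt hw
  have hEopen : IsOpen E := isOpen_lt continuous_const Complex.continuous_abs
  -- filled Julia set facts
  have hKs₁ : K₁ = Kset p₁ := hK₁
  have hKs₂ : K₂ = Kset p₂ := hK₂
  obtain ⟨R₀, hR₀1, hK₁cl, hK₁esc⟩ := aux_closed p₁ hmonic₁ (by rw [hdeg₁]; exact hd)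
  rw [← hKs₁] at hK₁cl hK₁esc
  have hinv₁ : ∀ z : ℂ, z ∈ K₁ᶜ → p₁.eval z ∈ K₁ᶜ := by
    intro z; rw [hKs₁]; exact (aux_inv p₁).mp
  have hinv₂ : ∀ z : ℂ, z ∈ K₂ᶜ → p₂.eval z ∈ K₂ᶜ := by
    intro z; rw [hKs₂]; exact (aux_inv p₂).mp
  -- basic facts about ψ on the exterior
  have hψ₁E : ∀ w ∈ E, ψ₁ w ∈ K₁ᶜ ∧ B₁ (ψ₁ w) = w := by
    intro w hw
    obtain ⟨z, hz, rfl⟩ := hB₁.surjOn hw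
    rw [hψ₁ z hz]; exact ⟨hz, rfl⟩
  have hψ₂E : ∀ w ∈ E, ψ₂ w ∈ K₂ᶜ ∧ B₂ (ψ₂ w) = w := by
    intro w hw
    obtain ⟨z, hz, rfl⟩ := hB₂.surjOn hw
    rw [hψ₂ z hz]; exact ⟨hz, rfl⟩
  -- tendsto of ψ along the radial approximating sequence
  have htin : ∀ w ∈ D, Tendsto (fun n : ℕ => ((1 + 1 / (n + 1) : ℝ)) • w) atTop
      (nhdsWithin w D) := by
    intro w hw
    rw [tendsto_nhdsWithin_iff]
    exact ⟨aux_useq w, Filter.Eventually.of_forall fun n => hED (aux_useq_abs w hw n)⟩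
  have htend : ∀ (ψ : ℂ → ℂ), ContinuousOn ψ D → ∀ w ∈ D,
      Tendsto (fun n : ℕ => ψ (((1 + 1 / (n + 1) : ℝ)) • w)) atTop (nhds (ψ w)) := by
    intro ψ hψ w hw
    exact (hψ w hw).tendsto.comp (htin w hw)
  -- circle points land in the closure of the basin
  have hψcirc : ∀ (ψ : ℂ → ℂ) (K : Set ℂ), ContinuousOn ψ D → (∀ w ∈ E, ψ w ∈ Kᶜ) →
      ∀ w, Complex.abs w = 1 → ψ w ∈ closure Kᶜ := by
    intro ψ K hc hEK w hw
    have hwD : w ∈ D := by rw [hD]; simp [hw]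
    exact mem_closure_of_tendsto (htend ψ hc w hwD)
      (Filter.Eventually.of_forall fun n => hEK _ (aux_useq_abs w hwD n))
  -- circle points do not land in the open basin
  have hcirc_not : ∀ w, Complex.abs w = 1 → ψ₁ w ∉ K₁ᶜ := by
    intro w hw hmem
    have hwD : w ∈ D := by rw [hD]; simp [hw]
    have h1 := htend ψ₁ hψ₁c w hwD
    have hBcont : ContinuousAt B₁ (ψ₁ w) :=
      (hB₁d.continuousOn).continuousAt (hK₁cl.isOpen_compl.mem_nhds hmem)
    have h2 : Tendsto (fun n : ℕ => B₁ (ψ₁ (((1 + 1 / (n + 1) : ℝ)) • w))) atTop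
        (nhds (B₁ (ψ₁ w))) := hBcont.tendsto.comp h1
    have h3 : Tendsto (fun n : ℕ => ((1 + 1 / (n + 1) : ℝ)) • w) atTop
        (nhds (B₁ (ψ₁ w))) := by
      refine h2.congr fun n => ?_
      exact (hψ₁E _ (aux_useq_abs w hwD n)).2
    have h4 : B₁ (ψ₁ w) = w := tendsto_nhds_unique h3 (aux_useq w)
    have h5 := hB₁.mapsTo hmem
    rw [h4] at h5
    change 1 < Complex.abs w at h5
    simp only [mem_setOf_eq, hw] at h5
    exact lt_irrefl 1 h5
  -- well-definedness of the extension
  have hwd : ∀ w w', 1 ≤ Complex.abs w → 1 ≤ Complex.abs w' → ψ₁ w = ψ₁ w' →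
      ψ₂ w = ψ₂ w' := by
    intro w w' hw hw' heq
    rcases eq_or_lt_of_le hw with h1 | h1
    · rcases eq_or_lt_of_le hw' with h2 | h2
      · obtain ⟨θ₁, hθ₁⟩ := aux_circle w h1.symm
        obtain ⟨θ₂, hθ₂⟩ := aux_circle w' h2.symm
        have := hlam θ₁ θ₂ (by rw [hθ₁, hθ₂]; exact heq)
        rw [hθ₁, hθ₂] at this; exact this
      · exfalso
        refine hcirc_not w h1.symm ?_
        rw [heq]
        exact (hψ₁E w' h2).1
    · rcases eq_or_lt_of_le hw' with h2 | h2
      · exfalso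
        refine hcirc_not w' h2.symm ?_
        rw [← heq]
        exact (hψ₁E w h1).1
      · have e1 : B₁ (ψ₁ w) = w := (hψ₁E w h1).2
        have e2 : B₁ (ψ₁ w') = w' := (hψ₁E w' h2).2
        rw [heq] at e1
        rw [e1] at e2
        rw [e2]
  -- definition of φ
  set φ : ℂ → ℂ := fun z =>
    if h : ∃ w, 1 ≤ Complex.abs w ∧ ψ₁ w = z then ψ₂ h.choose else 0 with hφdef
  have hφψ : ∀ w, 1 ≤ Complex.abs w → φ (ψ₁ w) = ψ₂ w := by
    intro w hw
    have hex : ∃ w', 1 ≤ Complex.abs w' ∧ ψ₁ w' = ψ₁ w := ⟨w, hw, rfl⟩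
    rw [hφdef]
    simp only [dif_pos hex]
    exact hwd _ _ hex.choose_spec.1 hw hex.choose_spec.2
  -- ratio bounds for B₁ near infinity
  have hratio : ∃ R₁ : ℝ, 1 ≤ R₁ ∧ (∀ z : ℂ, R₁ ≤ Complex.abs z → z ∈ K₁ᶜ) ∧
      ∀ z : ℂ, R₁ ≤ Complex.abs z →
        Complex.abs z / 2 ≤ Complex.abs (B₁ z) ∧ Complex.abs (B₁ z) ≤ 2 * Complex.abs z := by
    have h1 := Metric.tendsto_nhds.mp hB₁tan (1/2) (by norm_num)
    rw [(hasBasis_cobounded_compl_closedBall (0:ℂ)).eventually_iff] at h1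
    obtain ⟨r, -, hr⟩ := h1
    refine ⟨max R₀ (max (r+1) 1), le_max_of_le_right (le_max_right _ _), ?_, ?_⟩
    · intro z hz; exact hK₁esc z (le_trans (le_max_left _ _) hz)
    · intro z hz
      have hz1 : (1:ℝ) ≤ Complex.abs z :=
        le_trans (le_max_of_le_right (le_max_right _ _)) hz
      have hz0 : z ≠ 0 := by
        intro h; rw [h] at hz1; simp at hz1; linarith
      have hzr : z ∈ (Metric.closedBall (0:ℂ) r)ᶜ := by
        simp only [mem_compl_iff, Metric.mem_closedBall, dist_zero_right,
          Complex.norm_eq_abs, not_le]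
        have : r + 1 ≤ Complex.abs z := le_trans (le_max_of_le_right (le_max_left _ _)) hz
        linarith
      have h2 := hr hzr
      rw [Complex.dist_eq, Complex.norm_eq_abs] at h2
      have e1 : Complex.abs (B₁ z / z) = Complex.abs (B₁ z) / Complex.abs z :=
        map_div₀ Complex.abs _ _
      have h3 : Complex.abs (B₁ z / z) ≤ Complex.abs (B₁ z / z - 1) + 1 := by
        have := Complex.abs.add_le (B₁ z / z - 1) 1
        simpa using this
      have h4 : 1 - Complex.abs (B₁ z / z - 1) ≤ Complex.abs (B₁ z / z) := by
        have h5 : Complex.abs (1 : ℂ) ≤ Complex.abs (B₁ z / z) + Complex.abs (B₁ z / z - 1) := by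
          have := Complex.abs.sub_le_add (1 : ℂ) (B₁ z / z)
          have h6 := Complex.abs.add_le (B₁ z / z) (1 - B₁ z / z)
          simp only [add_sub_cancel] at h6
          calc Complex.abs (1:ℂ) ≤ Complex.abs (B₁ z / z) + Complex.abs (1 - B₁ z / z) := h6
            _ = Complex.abs (B₁ z / z) + Complex.abs (B₁ z / z - 1) := by
                rw [← Complex.abs.map_neg (1 - B₁ z / z)]; ring_nf
        simp only [map_one] at h5
        linarith
      rw [e1] at h3 h4
      have hzpos : (0:ℝ) < Complex.abs z := by linarith
      constructor
      · have h7 : (1/2 : ℝ) ≤ Complex.abs (B₁ z) / Complex.abs z := by linarith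
        have h8 := (le_div_iff₀ hzpos).mp h7
        linarith
      · have h7 : Complex.abs (B₁ z) / Complex.abs z ≤ 3/2 := by linarith
        have h8 := (div_le_iff₀ hzpos).mp h7
        linarith
  obtain ⟨R₁, hR₁1, hR₁esc, hR₁ratio⟩ := hratio
  -- properness of the inverse of the Böttcher coordinate
  have hprop : ∀ r : ℝ, R₁ ≤ r → ∀ w : ℂ, 2 * r < Complex.abs w →
      1 < Complex.abs w ∧ r < Complex.abs (ψ₁ w) := by
    intro r hr
    have hr1 : (1:ℝ) ≤ r := hR₁1.trans hr
    set U : Set ℂ := E ∩ ψ₁ ⁻¹' {z : ℂ | r < Complex.abs z} with hU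
    set U' : Set ℂ := E ∩ ψ₁ ⁻¹' {z : ℂ | Complex.abs z < R₁} with hU'
    have hUo : IsOpen U := (hψ₁c.mono hED).isOpen_inter_preimage hEopen
      (isOpen_lt continuous_const Complex.continuous_abs)
    have hU'o : IsOpen U' := (hψ₁c.mono hED).isOpen_inter_preimage hEopen
      (isOpen_lt Complex.continuous_abs continuous_const)
    have hdisj : Disjoint U U' := by
      rw [Set.disjoint_left]
      rintro w ⟨-, h1⟩ ⟨-, h2⟩
      simp only [mem_preimage, mem_setOf_eq] at h1 h2
      linarith
    have hsub : {w : ℂ | 2 * r < Complex.abs w} ⊆ U ∪ U' := by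
      intro w hw
      simp only [mem_setOf_eq] at hw
      have hwE : w ∈ E := by
        simp only [hE, mem_setOf_eq]; linarith
      by_cases hcase : Complex.abs (ψ₁ w) < R₁
      · right; exact ⟨hwE, hcase⟩
      · left
        refine ⟨hwE, ?_⟩
        push_neg at hcase
        have h2 := (hR₁ratio _ hcase).2
        rw [(hψ₁E w hwE).2] at h2
        simp only [mem_preimage, mem_setOf_eq]
        linarith
    set z₀ : ℂ := ((4*r+1 : ℝ) : ℂ) with hz₀
    have hz₀abs : Complex.abs z₀ = 4*r+1 := by
      rw [hz₀, Complex.abs_ofReal]; exact abs_of_pos (by linarith)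
    have hz₀K : z₀ ∈ K₁ᶜ := hR₁esc _ (by rw [hz₀abs]; linarith)
    have hz₀B := hR₁ratio z₀ (by rw [hz₀abs]; linarith)
    have hw₀V : B₁ z₀ ∈ {w : ℂ | 2 * r < Complex.abs w} := by
      simp only [mem_setOf_eq]
      have := hz₀B.1
      rw [hz₀abs] at this
      linarith
    have hw₀U : B₁ z₀ ∈ U := by
      refine ⟨hB₁.mapsTo hz₀K, ?_⟩
      simp only [mem_preimage, mem_setOf_eq]
      rw [hψ₁ z₀ hz₀K, hz₀abs]
      linarith
    have hVU := (aux_conn (2*r) (by linarith)).subset_or_subset hUo hU'o hdisj hsub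
    rcases hVU with hVU | hVU
    · intro w hw
      have hwU := hVU hw
      refine ⟨?_, ?_⟩
      · simpa [hE, mem_setOf_eq] using hwU.1
      · simpa [mem_preimage, mem_setOf_eq] using hwU.2
    · exfalso
      exact Set.disjoint_left.mp hdisj hw₀U (hVU hw₀V)
  -- B₁ is bounded on bounded subsets of the basin
  have hBbd : ∀ M : ℝ, ∀ z ∈ K₁ᶜ, Complex.abs z ≤ M →
      Complex.abs (B₁ z) ≤ 2 * max M R₁ := by
    intro M z hz hM
    by_contra hcon
    push_neg at hcon
    have h2 := hprop (max M R₁) (le_max_right _ _) (B₁ z) hcon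
    rw [hψ₁ z hz] at h2
    have h3 := le_max_left M R₁
    linarith [h2.2]
  -- compactness of closed annuli
  have hAcomp : ∀ r : ℝ, IsCompact {w : ℂ | 1 ≤ Complex.abs w ∧ Complex.abs w ≤ r} := by
    intro r
    refine Metric.isCompact_of_isClosed_isBounded ?_ ?_
    · have : {w : ℂ | 1 ≤ Complex.abs w ∧ Complex.abs w ≤ r} =
          {w : ℂ | 1 ≤ Complex.abs w} ∩ {w : ℂ | Complex.abs w ≤ r} := by
        ext w; simp [mem_setOf_eq]
      rw [this]
      exact (isClosed_le continuous_const Complex.continuous_abs).inter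
        (isClosed_le Complex.continuous_abs continuous_const)
    · refine (Metric.isBounded_closedBall (x := (0:ℂ)) (r := r)).subset ?_
      intro w hw
      simp only [Metric.mem_closedBall, dist_zero_right, Complex.norm_eq_abs]
      exact hw.2
  -- covering the closure by compact images
  have hcover : ∀ M : ℝ, 0 < M → closure K₁ᶜ ∩ Metric.ball 0 M ⊆
      ψ₁ '' {w : ℂ | 1 ≤ Complex.abs w ∧ Complex.abs w ≤ 2 * max M R₁} := by
    intro M hM
    set r := 2 * max M R₁ with hrdef
    set A := {w : ℂ | 1 ≤ Complex.abs w ∧ Complex.abs w ≤ r} with hA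
    have hS : IsCompact (ψ₁ '' A) :=
      (hAcomp r).image_of_continuousOn (hψ₁c.mono (fun w hw => hw.1))
    have hsub1 : K₁ᶜ ∩ Metric.ball 0 M ⊆ ψ₁ '' A := by
      rintro z ⟨hz, hzM⟩
      rw [Metric.mem_ball, dist_zero_right, Complex.norm_eq_abs] at hzM
      exact ⟨B₁ z, ⟨le_of_lt (hB₁.mapsTo hz), hBbd M z hz hzM.le⟩, hψ₁ z hz⟩
    calc closure K₁ᶜ ∩ Metric.ball 0 M = Metric.ball 0 M ∩ closure K₁ᶜ := by
          rw [Set.inter_comm]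
      _ ⊆ closure (Metric.ball 0 M ∩ K₁ᶜ) := Metric.isOpen_ball.inter_closure
      _ = closure (K₁ᶜ ∩ Metric.ball 0 M) := by rw [Set.inter_comm]
      _ ⊆ closure (ψ₁ '' A) := closure_mono hsub1
      _ = ψ₁ '' A := hS.isClosed.closure_eq
  -- semiconjugacy of ψ on the closed exterior
  have hsemi : ∀ (p : Polynomial ℂ) (B ψ : ℂ → ℂ) (K : Set ℂ),
      Set.BijOn B Kᶜ E → (∀ z ∈ Kᶜ, B (p.eval z) = B z ^ d) → ContinuousOn ψ D →
      (∀ z ∈ Kᶜ, ψ (B z) = z) → (∀ z : ℂ, z ∈ Kᶜ → p.eval z ∈ Kᶜ) →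
      ∀ w : ℂ, 1 ≤ Complex.abs w → ψ (w ^ d) = p.eval (ψ w) := by
    intro p B ψ K hB hBconj hψc hψB hinv
    have honE : ∀ w ∈ E, ψ (w ^ d) = p.eval (ψ w) := by
      intro w hw
      obtain ⟨z, hz, rfl⟩ := hB.surjOn hw
      rw [hψB z hz, ← hBconj z hz, hψB _ (hinv z hz)]
    intro w hw
    rcases eq_or_lt_of_le hw with h1 | h1
    · -- circle case, by continuity
      have hwD : w ∈ D := by rw [hD]; simp only [mem_setOf_eq]; exact hw
      have hwdD : w ^ d ∈ D := by
        rw [hD]; simp only [mem_setOf_eq, map_pow, ← h1, one_pow]; exact le_refl 1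
      have hmemE : ∀ n : ℕ, ((1 + 1 / (n + 1) : ℝ)) • w ∈ E :=
        fun n => aux_useq_abs w hw n
      have hpow : Tendsto (fun n : ℕ => (((1 + 1 / (n + 1) : ℝ)) • w) ^ d) atTop
          (nhdsWithin (w ^ d) D) := by
        rw [tendsto_nhdsWithin_iff]
        constructor
        · exact (aux_useq w).pow d
        · refine Filter.Eventually.of_forall fun n => ?_
          rw [hD]; simp only [mem_setOf_eq, map_pow]
          exact one_le_pow₀ (le_of_lt (hmemE n))
      have h2 : Tendsto (fun n : ℕ => ψ ((((1 + 1 / (n + 1) : ℝ)) • w) ^ d)) atTop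
          (nhds (ψ (w ^ d))) := (hψc _ hwdD).tendsto.comp hpow
      have h3 : Tendsto (fun n : ℕ => p.eval (ψ (((1 + 1 / (n + 1) : ℝ)) • w))) atTop
          (nhds (p.eval (ψ w))) := by
        have h4 : Tendsto (fun n : ℕ => ψ (((1 + 1 / (n + 1) : ℝ)) • w)) atTop
            (nhds (ψ w)) := (hψc w hwD).tendsto.comp (htin w hwD)
        exact (p.continuous.tendsto _).comp h4
      have h5 : Tendsto (fun n : ℕ => p.eval (ψ (((1 + 1 / (n + 1) : ℝ)) • w))) atTop
          (nhds (ψ (w ^ d))) := h2.congr fun n => honE _ (hmemE n)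
      exact tendsto_nhds_unique h5 h3
    · exact honE w h1
  have hsemi₁ := hsemi p₁ B₁ ψ₁ K₁ hB₁ hB₁conj hψ₁c hψ₁ hinv₁
  have hsemi₂ := hsemi p₂ B₂ ψ₂ K₂ hB₂ hB₂conj hψ₂c hψ₂ hinv₂
  -- the final assembly
  refine ⟨φ, ?_, ?_, ?_, ?_⟩
  · -- continuity
    intro z hz
    set M := Complex.abs z + 1 with hM
    have hMpos : 0 < M := by positivity
    set r := 2 * max M R₁ with hrdef
    set A := {w : ℂ | 1 ≤ Complex.abs w ∧ Complex.abs w ≤ r} with hA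
    have hcont : ContinuousOn φ (ψ₁ '' A) := by
      refine aux_quot (hAcomp r) (hψ₁c.mono (fun w hw => hw.1))
        (hψ₂c.mono (fun w hw => hw.1)) (fun w hw => hφψ w hw.1)
    have hzball : z ∈ Metric.ball (0:ℂ) M := by
      rw [Metric.mem_ball, dist_zero_right, Complex.norm_eq_abs]; linarith
    have hzS : z ∈ ψ₁ '' A := hcover M hMpos ⟨hz, hzball⟩
    have h1 : ContinuousWithinAt φ (ψ₁ '' A) z := hcont z hzS
    have h2 : ContinuousWithinAt φ (closure K₁ᶜ ∩ Metric.ball 0 M) z :=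
      h1.mono (hcover M hMpos)
    exact (continuousWithinAt_inter (Metric.isOpen_ball.mem_nhds hzball)).mp h2
  · -- maps to
    intro z hz
    have hzball : z ∈ Metric.ball (0:ℂ) (Complex.abs z + 1) := by
      rw [Metric.mem_ball, dist_zero_right, Complex.norm_eq_abs]; linarith
    obtain ⟨w, hwA, rfl⟩ := hcover (Complex.abs (z) + 1) (by positivity) ⟨hz, hzball⟩
    rw [hφψ w hwA.1]
    rcases eq_or_lt_of_le hwA.1 with h1 | h1
    · exact hψcirc ψ₂ K₂ hψ₂c (fun v hv => (hψ₂E v hv).1) w h1.symm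
    · exact subset_closure (hψ₂E w h1).1
  · -- agreement with ψ₂ ∘ B₁ on the basin
    intro z hz
    have h1 : ψ₁ (B₁ z) = z := hψ₁ z hz
    calc φ z = φ (ψ₁ (B₁ z)) := by rw [h1]
      _ = ψ₂ (B₁ z) := hφψ _ (le_of_lt (hB₁.mapsTo hz))
  · -- semiconjugacy
    intro z hz
    have hzball : z ∈ Metric.ball (0:ℂ) (Complex.abs z + 1) := by
      rw [Metric.mem_ball, dist_zero_right, Complex.norm_eq_abs]; linarith
    obtain ⟨w, hwA, rfl⟩ := hcover (Complex.abs (z) + 1) (by positivity) ⟨hz, hzball⟩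
    have hw1 : 1 ≤ Complex.abs w := hwA.1
    have hwd1 : 1 ≤ Complex.abs (w ^ d) := by
      rw [map_pow]; exact one_le_pow₀ hw1
    rw [hφψ w hw1, ← hsemi₁ w hw1, hφψ _ hwd1, hsemi₂ w hw1]
end
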